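/- arXiv:1705.04037 — 13 statements merged into one kernel-verified Lean document; each statement's English description precedes it below -/
import Mathlib

section
/- Let X be a Hausdorff topological space and let D be a countable subset of X each of whose elements is a W̃-point of X. Then every point x in the closure of D is a W̃-point of X. -/
open Filter Set Topology

/-- `x` is a W̃-point: player I has a winning strategy in the game G̃(x), where player I
chooses arbitrary nonempty open sets and player II picks points in them; player I wins
when `x` is an accumulation point (cluster point) of the resulting sequence. -/
def IsWtildePoint {X : Type*} [TopologicalSpace X] (x : X) : Prop :=
  ∃ σ : List X → Set X,
    (∀ h : List X, IsOpen (σ h) ∧ (σ h).Nonempty) ∧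
    ∀ p : ℕ → X,
      (∀ n : ℕ, p n ∈ σ (List.ofFn fun i : Fin n => p i)) →
      MapClusterPt x atTop p

/-!
Run the winning strategies of countably many points `f k` simultaneously: split the moves
into the columns `m ↦ Nat.pair k m`, and on the `k`-th column let player I follow the strategy
for `f k` against that column alone. Every `f k` is then a cluster point of the whole play,
and cluster points of a sequence form a closed set, so the closure of `range f` consists of
cluster points as well.
-/

namespace Wtilde

variable {X : Type*}

def FollowsStrategy (σ : List X → Set X) (p : ℕ → X) : Prop :=
  ∀ n, p n ∈ σ (List.ofFn fun i : Fin n => p i)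

/-- On the column `m ↦ Nat.pair k m` play `σ k`, fed only with the earlier moves of that
column. The default `x₀` of `getD` is never read: those moves all lie in the history. -/
def interleave (σ : ℕ → List X → Set X) (x₀ : X) (h : List X) : Set X :=
  σ h.length.unpair.1
    (List.ofFn fun i : Fin h.length.unpair.2 => h.getD (Nat.pair h.length.unpair.1 i) x₀)

lemma interleave_ofFn_pair (σ : ℕ → List X → Set X) (x₀ : X) (p : ℕ → X) (k m : ℕ) :
    interleave σ x₀ (List.ofFn fun j : Fin (Nat.pair k m) => p j) =
      σ k (List.ofFn fun i : Fin m => p (Nat.pair k i)) := by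
  simp only [interleave, List.length_ofFn, Nat.unpair_pair]
  congr 1
  refine List.ext_getElem (by simp) fun i hi _ => ?_
  simp only [List.length_ofFn] at hi
  simp [Nat.pair_lt_pair_right k hi]

lemma FollowsStrategy.column {σ : ℕ → List X → Set X} {x₀ : X} {p : ℕ → X}
    (hp : FollowsStrategy (interleave σ x₀) p) (k : ℕ) :
    FollowsStrategy (σ k) fun m => p (Nat.pair k m) := fun m => by
  simpa only [interleave_ofFn_pair] using hp (Nat.pair k m)

lemma tendsto_pair_atTop (k : ℕ) : Tendsto (Nat.pair k) atTop atTop :=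
  StrictMono.tendsto_atTop fun _ _ => Nat.pair_lt_pair_right k

variable [TopologicalSpace X]

lemma isWtildePoint_of_mem_closure_range {f : ℕ → X} (hf : ∀ k, IsWtildePoint (f k))
    {x : X} (hx : x ∈ closure (range f)) : IsWtildePoint x := by
  choose σ hσ using hf
  refine ⟨interleave σ x, fun h => (hσ _).1 _, fun p hp => ?_⟩
  refine closure_minimal ?_ isClosed_setOfPred_clusterPt hx
  rintro _ ⟨k, rfl⟩
  exact ((hσ k).2 (fun m => p (Nat.pair k m)) (FollowsStrategy.column hp k)).of_comp
    (tendsto_pair_atTop k)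

end Wtilde

theorem closure_of_countable_wtilde_points_general {X : Type*} [TopologicalSpace X]
    (D : Set X) (hD : D.Countable) (hW : ∀ d ∈ D, IsWtildePoint d)
    (x : X) (hx : x ∈ closure D) :
    IsWtildePoint x := by
  obtain rfl | hDne := D.eq_empty_or_nonempty
  · simp at hx
  obtain ⟨f, rfl⟩ := hD.exists_eq_range hDne
  exact Wtilde.isWtildePoint_of_mem_closure_range (forall_mem_range.mp hW) hx

/-- If  lies in the closure of a countable set of W̃-points of a Hausdorff space ,
then  is itself a W̃-point of . -/
theorem closure_of_countable_wtilde_points {X : Type*} [TopologicalSpace X] [T2Space X]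
    (D : Set X) (hD : D.Countable) (hW : ∀ d ∈ D, IsWtildePoint d)
    (x : X) (hx : x ∈ closure D) :
    IsWtildePoint x :=
  closure_of_countable_wtilde_points_general D hD hW x hx
end

section
/- The Stone–Čech compactification βℕ of the natural numbers (with the discrete topology) is a W̃-space: every point of βℕ is a W̃-point. -/
open Filter Set Topology

/-! Player I wins at every point of βℕ by forcing player II's moves. At a principal ultrafilter
`k` he always plays `{k}`, which is open because a point isolated in a dense subset of a
T1 space is isolated; at a free ultrafilter he plays `{n}` at stage `n`,
and a free ultrafilter, lying in the closure of every tail of `ℕ`, is a cluster point of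
`n ↦ n`. -/

section

variable {X : Type*} [TopologicalSpace X]

theorem isWtildePoint_of_mapClusterPt {x : X} {u : ℕ → X} (hu : ∀ n, IsOpen {u n})
    (hx : MapClusterPt x atTop u) : IsWtildePoint x := by
  refine ⟨fun h => {u h.length}, fun h => ⟨hu _, singleton_nonempty _⟩, fun p hp => ?_⟩
  have hpu : p = u := funext fun n => by simpa using hp n
  exact hpu ▸ hx

theorem mapClusterPt_atTop_of_mem_closure_range [T1Space X] {x : X} {u : ℕ → X}
    (hx : x ∈ closure (range u)) (hxu : x ∉ range u) : MapClusterPt x atTop u := by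
  rw [mapClusterPt_atTop_iff_forall_mem_closure]
  intro N
  have hsplit : range u = u '' Iio N ∪ u '' Ici N := by
    rw [← image_union, Iio_union_Ici, image_univ]
  rw [hsplit, closure_union, ((finite_Iio N).image u).isClosed.closure_eq] at hx
  exact hx.resolve_left fun ⟨n, _, hn⟩ => hxu ⟨n, hn⟩

end

theorem DenseRange.isOpen_singleton_of_isInducing {X Y : Type*} [TopologicalSpace X]
    [DiscreteTopology X] [TopologicalSpace Y] [T1Space Y] {f : X → Y} (hd : DenseRange f)
    (hf : IsInducing f) (a : X) : IsOpen {f a} := by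
  obtain ⟨U, hU, hUa⟩ := hf.isOpen_iff.1 (isOpen_discrete {a})
  have hfaU : f a ∈ U := by rw [← mem_preimage, hUa]; rfl
  suffices U ⊆ {f a} by rwa [← this.antisymm (singleton_subset_iff.2 hfaU)]
  intro y hy
  by_contra hne
  obtain ⟨b, hbU, hba⟩ := hd.exists_mem_open (hU.sdiff isClosed_singleton) ⟨y, hy, hne⟩
  have hb : b = a := by rw [← mem_singleton_iff, ← hUa]; exact hbU
  exact hba (hb ▸ rfl)

theorem isOpen_singleton_stoneCechUnit (k : ℕ) :
    IsOpen ({stoneCechUnit k} : Set (StoneCech ℕ)) :=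
  denseRange_stoneCechUnit.isOpen_singleton_of_isInducing isInducing_stoneCechUnit k

/-- The Stone–Čech compactification of ℕ is a W̃-space. -/
theorem stoneCech_nat_is_wtilde_space :
    ∀ x : StoneCech ℕ, IsWtildePoint x := by
  intro x
  by_cases hx : x ∈ range (stoneCechUnit : ℕ → StoneCech ℕ)
  · obtain ⟨k, rfl⟩ := hx
    exact isWtildePoint_of_mapClusterPt (fun _ => isOpen_singleton_stoneCechUnit k)
      tendsto_const_nhds.mapClusterPt
  · exact isWtildePoint_of_mapClusterPt isOpen_singleton_stoneCechUnit
      (mapClusterPt_atTop_of_mem_closure_range (denseRange_stoneCechUnit x) hx)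
end

section
/- The Stone–Čech compactification βℕ of the natural numbers (with the discrete topology) is not a W-space: there exists a point of βℕ which is not a W-point of βℕ. -/
/-!
Let `x ∈ βℕ \ ℕ` and let `σ` be any strategy for player I in `G(x)`. Every neighbourhood of `x`
contains infinitely many points of `ℕ`, so player II can run two plays against `σ` side by side,
answering only with natural numbers and never repeating a number used in the other play. If `σ`
were winning, `x` would lie in the closures of two disjoint subsets of `ℕ`, which are disjoint
clopen subsets of `βℕ`.
-/

open Filter Set Topology

/-- `x` is a W-point: player I has a winning strategy in Gruenhage's game G(x), where
player I chooses open sets containing `x` and player II picks points in them; player I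
wins when `x` is an accumulation point (cluster point) of the resulting sequence. -/
def IsWPoint {X : Type*} [TopologicalSpace X] (x : X) : Prop :=
  ∃ σ : List X → Set X,
    (∀ h : List X, IsOpen (σ h) ∧ x ∈ σ h) ∧
    ∀ p : ℕ → X,
      (∀ n : ℕ, p n ∈ σ (List.ofFn fun i : Fin n => p i)) →
      MapClusterPt x atTop p

section HistoryRecursion

variable {α : Type*}

def prefixRec (F : List α → α) (n : ℕ) : α :=
  F (List.ofFn fun i : Fin n => prefixRec F i)
termination_by n
decreasing_by exact i.2

theorem prefixRec_eq (F : List α → α) (n : ℕ) :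
    prefixRec F n = F (List.ofFn fun i : Fin n => prefixRec F i) := by
  rw [prefixRec]

end HistoryRecursion

section Plays

variable {X : Type*}

/-- `p` is a legal sequence of moves of player II against the strategy `σ` of player I. -/
def IsPlay (σ : List X → Set X) (p : ℕ → X) : Prop :=
  ∀ n, p n ∈ σ (List.ofFn fun i : Fin n => p i)

theorem exists_isPlay_disjoint_range (σ : List X → Set X) (hσ : ∀ h, (σ h).Infinite) :
    ∃ p q : ℕ → X, IsPlay σ p ∧ IsPlay σ q ∧ Disjoint (range p) (range q) := by
  have hfresh : ∀ h (l : List X), ∃ a ∈ σ h, a ∉ l := fun h l =>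
    (hσ h).exists_notMem_finite l.finite_toSet
  choose pick pick_mem pick_notMem using hfresh
  -- The two plays are built as one sequence of pairs, so that each answer can avoid the other play.
  let F : List (X × X) → X × X := fun l =>
    let a := pick (l.map Prod.fst) (l.map Prod.snd)
    (a, pick (l.map Prod.snd) (a :: l.map Prod.fst))
  let r := prefixRec F
  let prefixes n := List.ofFn fun i : Fin n => r i
  have hr : ∀ n, r n = F (prefixes n) := prefixRec_eq F
  have hprefix : ∀ (f : X × X → X) n, (List.ofFn fun i : Fin n => f (r i)) = (prefixes n).map f :=
    fun _ _ => List.map_ofFn.symm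
  have hmem : ∀ {m n}, m < n → r m ∈ prefixes n := fun h => List.mem_ofFn.2 ⟨⟨_, h⟩, rfl⟩
  have hfst_fresh : ∀ n, (r n).1 ∉ (prefixes n).map Prod.snd := fun n => by
    rw [hr n]
    exact pick_notMem _ _
  have hsnd_fresh : ∀ n, (r n).2 ∉ (r n).1 :: (prefixes n).map Prod.fst := fun n => by
    rw [hr n]
    exact pick_notMem _ _
  refine ⟨fun n => (r n).1, fun n => (r n).2, fun n => ?_, fun n => ?_, ?_⟩
  · show (r n).1 ∈ _
    rw [hprefix, hr n]
    exact pick_mem _ _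
  · show (r n).2 ∈ _
    rw [hprefix, hr n]
    exact pick_mem _ _
  · refine disjoint_range_iff.2 fun m n hmn => ?_
    rcases lt_trichotomy m n with hlt | rfl | hgt
    · exact hsnd_fresh n (hmn ▸ List.mem_cons_of_mem _ (List.mem_map_of_mem (hmem hlt)))
    · exact hsnd_fresh m (hmn ▸ List.mem_cons_self)
    · exact hfst_fresh m (hmn ▸ List.mem_map_of_mem (hmem hgt))

end Plays

theorem Dense.infinite_inter_of_mem_nhds {X : Type*} [TopologicalSpace X] [T1Space X]
    {D U : Set X} {x : X} (hD : Dense D) (hx : x ∉ D) (hU : U ∈ 𝓝 x) : (U ∩ D).Infinite := by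
  have hacc : AccPt x (𝓟 D) := accPt_iff_nhds.2 fun V hV =>
    let ⟨y, hyD, hyV⟩ := hD.inter_nhds_nonempty hV
    ⟨y, ⟨hyV, hyD⟩, fun hyx => hx (hyx ▸ hyD)⟩
  exact Set.Infinite.of_accPt (hacc.nhds_inter hU)

namespace StoneCech

variable {α : Type*} [TopologicalSpace α] [DiscreteTopology α]

theorem exists_notMem_range_stoneCechUnit [Infinite α] :
    ∃ x : StoneCech α, x ∉ range stoneCechUnit := by
  by_contra! h
  have : CompactSpace α := ⟨isInducing_stoneCechUnit.isCompact_iff.2 <| by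
    rw [image_univ, eq_univ_of_forall h]
    exact isCompact_univ⟩
  have : Finite α := finite_of_compact_of_discrete
  exact not_finite α

theorem disjoint_closure_of_subset_range {P Q : Set (StoneCech α)}
    (hP : P ⊆ range stoneCechUnit) (hQ : Q ⊆ range stoneCechUnit) (hPQ : Disjoint P Q) :
    Disjoint (closure P) (closure Q) := by
  classical
  have hf : Continuous fun a : α => decide (stoneCechUnit a ∈ P) := continuous_of_discreteTopology
  let C := stoneCechExtend hf ⁻¹' {true}
  have hC : IsClopen C := (isClopen_discrete _).preimage (continuous_stoneCechExtend hf)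
  have hPC : P ⊆ C := by
    intro y hy
    obtain ⟨a, rfl⟩ := hP hy
    simpa [C, stoneCechExtend_stoneCechUnit] using hy
  have hQC : Q ⊆ Cᶜ := by
    intro y hy
    obtain ⟨a, rfl⟩ := hQ hy
    simpa [C, stoneCechExtend_stoneCechUnit] using hPQ.notMem_of_mem_right hy
  exact disjoint_compl_right.mono (closure_minimal hPC hC.isClosed)
    (closure_minimal hQC hC.compl.isClosed)

end StoneCech

/-- The Stone–Čech compactification of ℕ is not a W-space: some point is not a W-point. -/
theorem stoneCech_nat_not_W_space :
    ∃ x : StoneCech ℕ, ¬ IsWPoint x := by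
  obtain ⟨x, hx⟩ := StoneCech.exists_notMem_range_stoneCechUnit (α := ℕ)
  refine ⟨x, fun ⟨σ, hσ, hwin⟩ => ?_⟩
  let τ h := σ h ∩ range stoneCechUnit
  obtain ⟨p, q, hp, hq, hpq⟩ := exists_isPlay_disjoint_range τ fun h =>
    denseRange_stoneCechUnit.infinite_inter_of_mem_nhds hx ((hσ h).1.mem_nhds (hσ h).2)
  have hrange : ∀ r, IsPlay τ r → range r ⊆ range stoneCechUnit := by
    rintro r hr _ ⟨n, rfl⟩
    exact (hr n).2
  have hclosure : ∀ r, IsPlay τ r → x ∈ closure (range r) := fun r hr =>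
    isClosed_closure.mem_of_mapClusterPt (hwin r fun n => (hr n).1)
      (Eventually.of_forall fun n => subset_closure (mem_range_self n))
  exact (StoneCech.disjoint_closure_of_subset_range (hrange p hp) (hrange q hq) hpq).ne_of_mem
    (hclosure p hp) (hclosure q hq) rfl
end

section
/- Let S be a nonempty set, let X^s = βℕ for every s ∈ S, and let a = (a^s)_{s∈S} ∈ ∏_{s∈S} βℕ. Then the Σ-product X_a = Σ_{s∈S} X^s(a) with base point a is a W̃-space. -/
/-!
Every factor βℕ has a countable π-base, the singletons of the isolated points. Player I names a
coordinate by its position in an enumeration of the support of `x` or of an earlier move; once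
the move exists, the address stays valid for the rest of the play. Finite sets of addresses
labelled by members of the π-bases form a countable family, and player I plays each of them at
infinitely many stages, as the basic open set it describes. A basic neighbourhood of `x` is
determined by a finite set `I` of coordinates. The coordinates in `I` at which `x` or some move
leaves the base point all have addresses, so one labelled set forces them into the neighbourhood
from some stage on. Every other coordinate in `I` equals the base point in `x` and in every move,
so at the later stages where that set is played, player II's point lies in the neighbourhood.
-/

open Filter Set Topology

structure IsPiBase {X ι : Type*} [TopologicalSpace X] (B : ι → Set X) : Prop where
  isOpen : ∀ i, IsOpen (B i)
  nonempty : ∀ i, (B i).Nonempty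
  exists_subset : ∀ U : Set X, IsOpen U → U.Nonempty → ∃ i, B i ⊆ U

theorem IsPiBase.exists_subset_of_mem_nhds {X ι : Type*} [TopologicalSpace X] {B : ι → Set X}
    (hB : IsPiBase B) {x : X} {U : Set X} (hU : U ∈ 𝓝 x) : ∃ i, B i ⊆ U := by
  obtain ⟨i, hi⟩ :=
    hB.exists_subset (interior U) isOpen_interior ⟨x, mem_interior_iff_mem_nhds.2 hU⟩
  exact ⟨i, hi.trans interior_subset⟩

section StoneCech

variable {α : Type*} [TopologicalSpace α] [DiscreteTopology α]

theorem isOpen_singleton_stoneCechUnit_s5 (m : α) : IsOpen {stoneCechUnit m} := by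
  classical
  have hf : Continuous fun k : α => decide (k = m) := continuous_of_discreteTopology
  set O := stoneCechExtend hf ⁻¹' {true}
  have hO : IsOpen O := (isOpen_discrete _).preimage (continuous_stoneCechExtend hf)
  have hmem : stoneCechUnit m ∈ O := by simp [O, stoneCechExtend_stoneCechUnit]
  have hunit : O ∩ range stoneCechUnit ⊆ {stoneCechUnit m} := by
    rintro _ ⟨hk, k, rfl⟩
    simp_all [O, stoneCechExtend_stoneCechUnit]
  have hsub : O ⊆ {stoneCechUnit m} := by
    simpa using (denseRange_stoneCechUnit.open_subset_closure_inter hO).trans (closure_mono hunit)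
  rwa [← (subsingleton_singleton.anti hsub).eq_singleton_of_mem hmem]

theorem isPiBase_singleton_stoneCechUnit :
    IsPiBase fun m : α => ({stoneCechUnit m} : Set (StoneCech α)) where
  isOpen := isOpen_singleton_stoneCechUnit_s5
  nonempty _ := singleton_nonempty _
  exists_subset U hU hne := by
    obtain ⟨m, hm⟩ := denseRange_stoneCechUnit.exists_mem_open hU hne
    exact ⟨m, singleton_subset_iff.2 hm⟩

end StoneCech

section Game

variable {X : Type*}

def history (p : ℕ → X) (n : ℕ) : List X := List.ofFn fun i : Fin n => p i

theorem history_getD (p : ℕ → X) {n i : ℕ} (hi : i < n) (d : X) :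
    (history p n).getD i d = p i := by
  simp [history, hi]

variable [TopologicalSpace X]

theorem isWtildePoint_of_eventually {ι : Type*} [Countable ι] [Nonempty ι] {x : X}
    (F : List X → ι → Set X) (hF : ∀ h k, IsOpen (F h k) ∧ (F h k).Nonempty)
    (hwin : ∀ p : ℕ → X, ∀ U ∈ 𝓝 x,
      ∃ k, ∀ᶠ n in atTop, p n ∈ F (history p n) k → p n ∈ U) :
    IsWtildePoint x := by
  obtain ⟨e, he⟩ := exists_surjective_nat ι
  -- Option `e k` is played at every stage `Nat.pair k _`, hence infinitely often.
  refine ⟨fun h => F h (e h.length.unpair.1), fun h => hF _ _, fun p hp => ?_⟩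
  refine mapClusterPt_iff_frequently.2 fun U hU => frequently_atTop.2 fun N => ?_
  obtain ⟨k, hk⟩ := hwin p U hU
  obtain ⟨N₀, hN₀⟩ := eventually_atTop.1 hk
  obtain ⟨k, rfl⟩ := he k
  have hN : max N N₀ ≤ Nat.pair k (max N N₀) := Nat.right_le_pair _ _
  refine ⟨Nat.pair k (max N N₀), le_of_max_le_left hN, hN₀ _ (le_of_max_le_right hN) ?_⟩
  simpa [history] using hp (Nat.pair k (max N N₀))

end Game

abbrev SigmaProduct {S : Type*} {X : S → Type*} (a : ∀ s, X s) : Type _ :=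
  {x : ∀ s, X s // {s | x s ≠ a s}.Countable}

namespace SigmaProduct

variable {S : Type*} {X : S → Type*} {a : ∀ s, X s}

theorem exists_forall_mem (J : Finset S) {W : ∀ s, Set (X s)} (hW : ∀ s ∈ J, (W s).Nonempty) :
    ∃ y : SigmaProduct a, ∀ s ∈ J, y.1 s ∈ W s := by
  classical
  refine ⟨⟨fun s => if hs : s ∈ J then (hW s hs).some else a s,
    J.countable_toSet.mono fun s hs => ?_⟩, fun s hs => ?_⟩
  · by_contra h
    exact hs (dif_neg h)
  · simpa [hs] using (hW s hs).some_mem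

theorem exists_finset_forall_mem_subset_of_mem_nhds [∀ s, TopologicalSpace (X s)]
    {x : SigmaProduct a} {U : Set (SigmaProduct a)} (hU : U ∈ 𝓝 x) :
    ∃ I : Finset S, ∃ V : ∀ s, Set (X s), (∀ s, V s ∈ 𝓝 (x.1 s)) ∧
      ∀ y : SigmaProduct a, (∀ s ∈ I, y.1 s ∈ V s) → y ∈ U := by
  rw [nhds_induced, mem_comap] at hU
  obtain ⟨W, hW, hWU⟩ := hU
  rw [nhds_pi, mem_pi'] at hW
  obtain ⟨I, V, hV, hVW⟩ := hW
  exact ⟨I, V, hV, fun y hy => hWU (hVW hy)⟩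

variable [Nonempty S]

theorem exists_support_subset_range (y : SigmaProduct a) :
    ∃ f : ℕ → S, {s | y.1 s ≠ a s} ⊆ range f := by
  obtain ⟨f, hf⟩ := (y.2.insert (Classical.arbitrary S)).exists_eq_range (insert_nonempty _ _)
  exact ⟨f, hf ▸ subset_insert _ _⟩

noncomputable def enum (y : SigmaProduct a) : ℕ → S := (exists_support_subset_range y).choose

theorem support_subset_range_enum (y : SigmaProduct a) : {s | y.1 s ≠ a s} ⊆ range (enum y) :=
  (exists_support_subset_range y).choose_spec

noncomputable def address (x : SigmaProduct a) (h : List (SigmaProduct a)) (q : ℕ × ℕ) : S :=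
  enum ((x :: h).getD q.1 x) q.2

theorem exists_address_eq (x : SigmaProduct a) (p : ℕ → SigmaProduct a) {s : S}
    (hs : x.1 s ≠ a s ∨ ∃ i, (p i).1 s ≠ a s) :
    ∃ q : ℕ × ℕ, ∀ n ≥ q.1, address x (history p n) q = s := by
  rcases hs with hs | ⟨i, hs⟩
  · obtain ⟨j, hj⟩ := support_subset_range_enum x hs
    exact ⟨(0, j), fun n _ => by simpa [address] using hj⟩
  · obtain ⟨j, hj⟩ := support_subset_range_enum (p i) hs
    refine ⟨(i + 1, j), fun n hn => ?_⟩
    simpa only [address, List.getD_cons_succ, history_getD p (Nat.lt_of_succ_le hn)] using hj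

variable {ι : Type*}

def constraint (B : ∀ s, ι → Set (X s)) (x : SigmaProduct a) (h : List (SigmaProduct a))
    (L : Finset ((ℕ × ℕ) × ι)) : Set (SigmaProduct a) :=
  ⋂ t ∈ L, {y | y.1 (address x h t.1) ∈ B _ t.2}

theorem mem_constraint_image_iff [DecidableEq ι] {B : ∀ s, ι → Set (X s)} {x : SigmaProduct a}
    {h : List (SigmaProduct a)} {J : Finset S} {q : S → ℕ × ℕ} {m : S → ι}
    (hq : ∀ s ∈ J, address x h (q s) = s) {y : SigmaProduct a} :
    y ∈ constraint B x h (J.image fun s => (q s, m s)) ↔ ∀ s ∈ J, y.1 s ∈ B s (m s) := by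
  simp only [constraint, mem_iInter₂, Finset.forall_mem_image]
  refine forall₂_congr fun s hs => ?_
  rw [hq s hs]
  rfl

variable [∀ s, TopologicalSpace (X s)]

theorem isOpen_constraint {B : ∀ s, ι → Set (X s)} (hB : ∀ s i, IsOpen (B s i))
    (x : SigmaProduct a) (h : List (SigmaProduct a)) (L : Finset ((ℕ × ℕ) × ι)) :
    IsOpen (constraint B x h L) :=
  isOpen_biInter_finset fun t _ =>
    (hB _ t.2).preimage ((continuous_apply _).comp continuous_subtype_val)

theorem isWtildePoint [Countable ι] {B : ∀ s, ι → Set (X s)} (hB : ∀ s, IsPiBase (B s))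
    (x : SigmaProduct a) : IsWtildePoint x := by
  classical
  -- Conflicting demands on one coordinate describe the empty set; player I then plays `univ`.
  refine isWtildePoint_of_eventually
    (fun h L => if (constraint B x h L).Nonempty then constraint B x h L else univ)
    (fun h L => ?_) (fun p U hU => ?_)
  · split_ifs with hne
    · exact ⟨isOpen_constraint (fun s => (hB s).isOpen) x h L, hne⟩
    · exact ⟨isOpen_univ, ⟨x, mem_univ _⟩⟩
  obtain ⟨I, V, hV, hVU⟩ := exists_finset_forall_mem_subset_of_mem_nhds hU
  let T := {s | x.1 s ≠ a s ∨ ∃ i, (p i).1 s ≠ a s}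
  choose! q hq using fun s (hs : s ∈ T) => exists_address_eq x p hs
  choose m hm using fun s => (hB s).exists_subset_of_mem_nhds (hV s)
  let J := I.filter (· ∈ T)
  refine ⟨J.image fun s => (q s, m s), eventually_atTop.2
    ⟨J.sup fun s => (q s).1, fun n hn hpn => hVU _ fun s hsI => ?_⟩⟩
  have haddr : ∀ s ∈ J, address x (history p n) (q s) = s := fun s hs =>
    hq s (Finset.mem_filter.1 hs).2 n
      ((Finset.le_sup (f := fun s => (q s).1) hs).trans hn)
  have hne : (constraint B x (history p n) (J.image fun s => (q s, m s))).Nonempty := by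
    obtain ⟨y, hy⟩ := exists_forall_mem J fun s _ => (hB s).nonempty (m s)
    exact ⟨y, (mem_constraint_image_iff haddr).2 hy⟩
  rw [if_pos hne, mem_constraint_image_iff haddr] at hpn
  by_cases hsT : s ∈ T
  · exact hm s (hpn s (Finset.mem_filter.2 ⟨hsI, hsT⟩))
  · obtain ⟨hxs, hps⟩ : x.1 s = a s ∧ ∀ i, (p i).1 s = a s := by
      simpa [T, not_or] using hsT
    rw [hps n, ← hxs]
    exact mem_of_mem_nhds (hV s)

end SigmaProduct

/-- For any nonempty index set `S` and base point `a`, the Σ-product of copies of βℕ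
with base point `a` is a W̃-space. -/
theorem sigmaProduct_stoneCech_is_wtilde_space {S : Type*} [Nonempty S]
    (a : S → StoneCech ℕ) :
    ∀ x : {x : S → StoneCech ℕ // {s : S | x s ≠ a s}.Countable}, IsWtildePoint x :=
  SigmaProduct.isWtildePoint fun _ => isPiBase_singleton_stoneCechUnit
end

section
/- Let S be a set, let X^s = βℕ for every s ∈ S, let a = (a^s)_{s∈S} ∈ ∏_{s∈S} βℕ, and let X_a be the Σ-product Σ_{s∈S} X^s(a). Then the family of all subspaces of X_a of the form {(x^s)_{s∈S} ∈ X_a : x^s = a^s for every s ∈ S \ S'}, where S' ranges over the at most countable subsets of S, is a rich family in X_a, and each member of this family is a Baire space. -/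
open Filter Set Topology

/-- A set `s` is a separable subspace: it has a countable subset that is dense in `s`. -/
def SeparableSubspace {Y : Type*} [TopologicalSpace Y] (s : Set Y) : Prop :=
  ∃ c : Set Y, c ⊆ s ∧ c.Countable ∧ s ⊆ closure c

/-- A rich family: a family of nonempty closed separable subspaces such that every
separable subspace is contained in some member, and the closure of the union of any
increasing sequence of members is again a member. -/
def IsRichFamily {Y : Type*} [TopologicalSpace Y] (𝓕 : Set (Set Y)) : Prop :=
  (∀ F ∈ 𝓕, F.Nonempty ∧ IsClosed F ∧ SeparableSubspace F) ∧
  (∀ Z : Set Y, SeparableSubspace Z → ∃ F ∈ 𝓕, Z ⊆ F) ∧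
  (∀ F : ℕ → Set Y, (∀ n, F n ∈ 𝓕) → Monotone F → closure (⋃ n, F n) ∈ 𝓕)

section Aux

open scoped Classical

variable {S : Type*} (a : S → StoneCech ℕ)

/-- The subspace of the Σ-product obtained by fixing coordinates outside `S'`. -/
def sigmaFix (S' : Set S) : Set {x : S → StoneCech ℕ // {s : S | x s ≠ a s}.Countable} :=
  {x | ∀ s ∉ S', x.1 s = a s}

lemma isClosed_sigmaFix (S' : Set S) : IsClosed (sigmaFix a S') := by
  have : sigmaFix a S' = ⋂ (s : S) (_ : s ∉ S'),
      {x : {x : S → StoneCech ℕ // {s : S | x s ≠ a s}.Countable} | x.1 s = a s} := by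
    ext x; simp [sigmaFix]
  rw [this]
  refine isClosed_iInter fun s => isClosed_iInter fun _ => isClosed_eq ?_ continuous_const
  exact (continuous_apply s).comp continuous_subtype_val

/-- `sigmaFix a S'` is homeomorphic to the full product over `S'`. -/
noncomputable def sigmaFixHomeo (S' : Set S) (hS' : S'.Countable) :
    (sigmaFix a S') ≃ₜ (S' → StoneCech ℕ) where
  toFun x s := x.1.1 s
  invFun g :=
    ⟨⟨fun s => if h : s ∈ S' then g ⟨s, h⟩ else a s,
      Set.Countable.mono (fun s hs => by
        by_contra h
        exact hs (dif_neg h)) hS'⟩,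
      fun s hs => dif_neg hs⟩
  left_inv x := by
    apply Subtype.ext; apply Subtype.ext
    funext s
    show (if h : s ∈ S' then x.1.1 s else a s) = x.1.1 s
    by_cases h : s ∈ S'
    · exact dif_pos h
    · rw [dif_neg h]
      exact (x.2 s h).symm
  right_inv g := by
    funext s
    exact dif_pos s.2
  continuous_toFun :=
    continuous_pi fun s => (continuous_apply s.1).comp
      (continuous_subtype_val.comp continuous_subtype_val)
  continuous_invFun := by
    refine Continuous.subtype_mk (Continuous.subtype_mk ?_ _) _
    refine continuous_pi fun s => ?_
    by_cases h : s ∈ S'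
    · simp only [dif_pos h]
      exact continuous_apply _
    · simp only [dif_neg h]
      exact continuous_const

lemma separableSubspace_of_sep {Y : Type*} [TopologicalSpace Y] (s : Set Y)
    [TopologicalSpace.SeparableSpace s] : SeparableSubspace s := by
  obtain ⟨t, htc, htd⟩ := TopologicalSpace.exists_countable_dense s
  refine ⟨Subtype.val '' t, ?_, htc.image _, fun x hx => ?_⟩
  · rintro _ ⟨y, -, rfl⟩; exact y.2
  · have : (⟨x, hx⟩ : s) ∈ closure t := htd _
    exact closure_subtype.mp this

instance : TopologicalSpace.SeparableSpace (StoneCech ℕ) :=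
  denseRange_stoneCechUnit.separableSpace continuous_stoneCechUnit

end Aux

/-- In the Σ-product of copies of βℕ with base point `a`, the family of all subspaces
obtained by fixing the coordinates outside an at most countable set `S'` to those of `a`
is a rich family consisting of Baire subspaces. -/
theorem sigmaProduct_stoneCech_rich_family_of_Baire {S : Type*} (a : S → StoneCech ℕ) :
    IsRichFamily {F : Set {x : S → StoneCech ℕ // {s : S | x s ≠ a s}.Countable} |
        ∃ S' : Set S, S'.Countable ∧
          F = {x : {x : S → StoneCech ℕ // {s : S | x s ≠ a s}.Countable} |
            ∀ s ∉ S', x.1 s = a s}} ∧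
    ∀ F : Set {x : S → StoneCech ℕ // {s : S | x s ≠ a s}.Countable},
      (∃ S' : Set S, S'.Countable ∧
        F = {x : {x : S → StoneCech ℕ // {s : S | x s ≠ a s}.Countable} |
          ∀ s ∉ S', x.1 s = a s}) →
      BaireSpace F := by
  classical
  -- βℕ contains two distinct points
  have hne : (stoneCechUnit 0 : StoneCech ℕ) ≠ stoneCechUnit 1 := by
    intro h
    have := eq_if_stoneCechUnit_eq (f := fun n : ℕ => decide (n = 0))
      (continuous_of_discreteTopology) h
    simp at this
  have hexists : ∀ s : S, ∃ p : StoneCech ℕ, p ≠ a s := by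
    intro s
    rcases eq_or_ne (a s) (stoneCechUnit 0) with h | h
    · exact ⟨stoneCechUnit 1, by rw [h]; exact fun hh => hne hh.symm⟩
    · exact ⟨stoneCechUnit 0, fun hh => h hh.symm⟩
  have habase : ({s : S | a s ≠ a s} : Set S).Countable := by
    have : {s : S | a s ≠ a s} = (∅ : Set S) := by ext s; simp
    rw [this]; exact Set.countable_empty
  constructor
  · refine ⟨?_, ?_, ?_⟩
    · -- nonempty, closed, separable
      rintro F ⟨S', hS', rfl⟩
      refine ⟨⟨⟨a, habase⟩, fun s _ => rfl⟩, isClosed_sigmaFix a S', ?_⟩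
      haveI := hS'.to_subtype
      haveI : TopologicalSpace.SeparableSpace
          (({x : {x : S → StoneCech ℕ // {s : S | x s ≠ a s}.Countable} |
            ∀ s ∉ S', x.1 s = a s}) : Set _) :=
        ((sigmaFixHomeo a S' hS').symm.surjective.denseRange).separableSpace
          (sigmaFixHomeo a S' hS').symm.continuous
      exact separableSubspace_of_sep _
    · -- every separable subspace is contained in a member
      rintro Z ⟨c, hcZ, hcc, hZc⟩
      refine ⟨sigmaFix a (⋃ x ∈ c, {s : S | x.1 s ≠ a s}),
        ⟨⋃ x ∈ c, {s : S | x.1 s ≠ a s},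
          hcc.biUnion fun x _ => x.2, rfl⟩, ?_⟩
      have hcF : c ⊆ sigmaFix a (⋃ x ∈ c, {s : S | x.1 s ≠ a s}) := by
        intro x hx s hs
        by_contra h
        exact hs (Set.mem_biUnion hx h)
      exact hZc.trans (closure_minimal hcF (isClosed_sigmaFix a _))
    · -- closure of union of increasing sequence
      intro F hF hmono
      choose S' hS'c hS'eq using hF
      have hS'mono : Monotone S' := by
        intro m n hmn s hs
        obtain ⟨p, hp⟩ := hexists s
        have hycnt : ({t : S | (if t = s then p else a t) ≠ a t}).Countable := by
          refine Set.Countable.mono ?_ (Set.countable_singleton s)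
          intro t ht
          by_contra h
          have hts : t ≠ s := fun h' => h (by simp [h'])
          simp only [mem_setOf_eq, if_neg hts] at ht
          exact ht rfl
        have hym : (⟨fun t => if t = s then p else a t, hycnt⟩ :
            {x : S → StoneCech ℕ // {s : S | x s ≠ a s}.Countable}) ∈ F m := by
          rw [hS'eq m]
          intro t ht
          have hts : t ≠ s := fun h => ht (h ▸ hs)
          exact if_neg hts
        have hyn := hmono hmn hym
        rw [hS'eq n] at hyn
        by_contra hsn
        have h2 : (if s = s then p else a s) = a s := hyn s hsn
        rw [if_pos rfl] at h2
        exact hp h2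
      have hTc : (⋃ n, S' n).Countable := Set.countable_iUnion hS'c
      refine ⟨⋃ n, S' n, hTc, ?_⟩
      apply Set.Subset.antisymm
      · refine closure_minimal (Set.iUnion_subset fun n => ?_)
          (isClosed_sigmaFix a (⋃ n, S' n))
        rw [hS'eq n]
        intro x hx s hs
        exact hx s fun h => hs (Set.mem_iUnion.mpr ⟨n, h⟩)
      · intro x hx
        rw [closure_subtype]
        rw [mem_closure_iff]
        intro o ho hxo
        obtain ⟨I, u, hIu, hsub⟩ := isOpen_pi_iff.mp ho _ hxo
        set J : Finset S := I.filter (· ∈ ⋃ n, S' n) with hJ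
        have hnof : ∀ s ∈ J, ∃ n, s ∈ S' n := fun s hs =>
          Set.mem_iUnion.mp (Finset.mem_filter.mp hs).2
        choose! nof hnofs using hnof
        set N : ℕ := J.sup nof with hN
        have hJN : ∀ s ∈ J, s ∈ S' N := fun s hs =>
          hS'mono (Finset.le_sup hs) (hnofs s hs)
        have hycnt : ({s : S | (if s ∈ S' N then x.1 s else a s) ≠ a s}).Countable := by
          refine Set.Countable.mono ?_ x.2
          intro s hs
          simp only [mem_setOf_eq] at hs ⊢
          by_cases h' : s ∈ S' N
          · rwa [if_pos h'] at hs
          · rw [if_neg h'] at hs; exact absurd rfl hs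
        have hyF : (⟨fun s => if s ∈ S' N then x.1 s else a s, hycnt⟩ :
            {x : S → StoneCech ℕ // {s : S | x s ≠ a s}.Countable}) ∈ F N := by
          rw [hS'eq N]
          intro s hs
          exact if_neg hs
        refine ⟨fun s => if s ∈ S' N then x.1 s else a s, ?_,
          ⟨⟨fun s => if s ∈ S' N then x.1 s else a s, hycnt⟩,
            Set.mem_iUnion.mpr ⟨N, hyF⟩, rfl⟩⟩
        apply hsub
        intro i hi
        show (if i ∈ S' N then x.1 i else a i) ∈ u i
        by_cases h : i ∈ S' N
        · rw [if_pos h]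
          exact (hIu i hi).2
        · have hiT : i ∉ ⋃ n, S' n := fun hT' => h (hJN i (Finset.mem_filter.mpr ⟨hi, hT'⟩))
          have hxi : x.1 i = a i := hx i hiT
          rw [if_neg h, ← hxi]
          exact (hIu i hi).2
  · -- each member is Baire
    rintro F ⟨S', hS', rfl⟩
    haveI := hS'.to_subtype
    haveI : CompactSpace (({x : {x : S → StoneCech ℕ // {s : S | x s ≠ a s}.Countable} |
        ∀ s ∉ S', x.1 s = a s}) : Set _) :=
      (sigmaFixHomeo a S' hS').symm.compactSpace
    infer_instance
end

section
/- Let {X_s : s ∈ S} be a family of compact Hausdorff topological spaces and let a ∈ ∏_{s∈S} X_s. Then the Σ-product Σ_{s∈S} X_s(a), with the subspace topology inherited from the product ∏_{s∈S} X_s, is a Baire space. -/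
open Filter Set Topology

private lemma shrink_step {α : Type*} [TopologicalSpace α] [RegularSpace α]
    {U D : Set α} (hU : IsOpen U) (hne : U.Nonempty) (hDo : IsOpen D) (hD : Dense D) :
    ∃ V : Set α, IsOpen V ∧ V.Nonempty ∧ closure V ⊆ U ∩ D := by
  obtain ⟨x, hx⟩ := hD.inter_open_nonempty U hU hne
  have hUD : IsOpen (U ∩ D) := hU.inter hDo
  obtain ⟨t, htx, htc, hts⟩ := exists_mem_nhds_isClosed_subset (hUD.mem_nhds hx)
  refine ⟨interior t, isOpen_interior, ⟨x, mem_interior_iff_mem_nhds.2 htx⟩, ?_⟩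
  calc closure (interior t) ⊆ closure t := closure_mono interior_subset
    _ = t := htc.closure_eq
    _ ⊆ U ∩ D := hts

/-- The Σ-product of a family of compact Hausdorff spaces, with any base point, is a
Baire space. -/
theorem sigmaProduct_compact_baireSpace {S : Type*} (X : S → Type*)
    [∀ s, TopologicalSpace (X s)] [∀ s, CompactSpace (X s)] [∀ s, T2Space (X s)]
    (a : ∀ s, X s) :
    BaireSpace {x : ∀ s, X s // {s : S | x s ≠ a s}.Countable} := by
  set α := {x : ∀ s, X s // {s : S | x s ≠ a s}.Countable} with hα
  constructor
  intro f hopen hdense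
  rw [dense_iff_inter_open]
  rintro W hW hWne
  -- Recursively shrink open sets using regularity
  have step : ∀ (n : ℕ) (U : {V : Set α // IsOpen V ∧ V.Nonempty}),
      ∃ V : {V : Set α // IsOpen V ∧ V.Nonempty}, closure V.1 ⊆ U.1 ∩ f n := by
    intro n U
    obtain ⟨V, hVo, hVne, hVsub⟩ := shrink_step U.2.1 U.2.2 (hopen n) (hdense n)
    exact ⟨⟨V, hVo, hVne⟩, hVsub⟩
  choose next hnext using step
  let seq : ℕ → {V : Set α // IsOpen V ∧ V.Nonempty} := fun n =>
    Nat.rec ⟨W, hW, hWne⟩ (fun n V => next n V) n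
  have hseq : ∀ n, closure (seq (n + 1)).1 ⊆ (seq n).1 ∩ f n := fun n => hnext n (seq n)
  -- pick points in the sets
  choose xs hxs using fun n => (seq n).2.2
  set T : Set S := ⋃ n, {s | (xs n).1 s ≠ a s} with hTdef
  have hT : T.Countable := countable_iUnion fun n => (xs n).2
  set K : Set α := {x | ∀ s ∉ T, x.1 s = a s} with hKdef
  have hKclosed : IsClosed K := by
    have hK : K = ⋂ s ∈ Tᶜ, (fun x : α => x.1 s) ⁻¹' {a s} := by
      ext x; simp [hKdef, Set.mem_iInter]
    rw [hK]
    exact isClosed_biInter fun s _ =>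
      isClosed_singleton.preimage ((continuous_apply s).comp continuous_subtype_val)
  have hKcompact : IsCompact K := by
    rw [Topology.IsEmbedding.subtypeVal.isCompact_iff]
    have himg : Subtype.val '' K = {y : ∀ s, X s | ∀ s ∉ T, y s = a s} := by
      ext y
      constructor
      · rintro ⟨x, hx, rfl⟩; exact hx
      · intro hy
        have hc : {s | y s ≠ a s}.Countable :=
          hT.mono (fun s hs => by by_contra h; exact hs (hy s h))
        exact ⟨⟨y, hc⟩, hy, rfl⟩
    rw [himg]
    have hclosed : IsClosed {y : ∀ s, X s | ∀ s ∉ T, y s = a s} := by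
      have : {y : ∀ s, X s | ∀ s ∉ T, y s = a s} = ⋂ s ∈ Tᶜ, (fun y => y s) ⁻¹' {a s} := by
        ext y; simp [Set.mem_iInter]
      rw [this]
      exact isClosed_biInter fun s _ => isClosed_singleton.preimage (continuous_apply s)
    exact hclosed.isCompact
  -- the nested compact sets
  set Z : ℕ → Set α := fun n => K ∩ closure (seq n).1 with hZdef
  have hZdec : ∀ n, Z (n + 1) ⊆ Z n := fun n =>
    inter_subset_inter_right K <|
      (hseq n).trans <| (inter_subset_left).trans subset_closure
  have hxK : ∀ n, xs n ∈ K := by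
    intro n s hs
    by_contra h
    exact hs (mem_iUnion.2 ⟨n, h⟩)
  have hZne : ∀ n, (Z n).Nonempty := fun n => ⟨xs n, hxK n, subset_closure (hxs n)⟩
  have hZclosed : ∀ n, IsClosed (Z n) := fun n => hKclosed.inter isClosed_closure
  have hZ0 : IsCompact (Z 0) := hKcompact.inter_right isClosed_closure
  obtain ⟨x, hx⟩ :=
    IsCompact.nonempty_iInter_of_sequence_nonempty_isCompact_isClosed Z hZdec hZne hZ0 hZclosed
  have hxcl : ∀ n, x ∈ closure (seq (n + 1)).1 := fun n =>
    (mem_iInter.1 hx (n + 1)).2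
  refine ⟨x, ?_, mem_iInter.2 fun n => (hseq n (hxcl n)).2⟩
  have : x ∈ (seq 0).1 := (hseq 0 (hxcl 0)).1
  exact this
end

section
/- Let X and Y be topological spaces and let O be an open dense subset of X × Y. Let U be a nonempty open subset of X, and let V₁, …, V_m be nonempty open subsets of Y. Then there exist a nonempty open subset W of U and points z_i ∈ V_i for 1 ≤ i ≤ m such that W × {z₁, …, z_m} ⊆ O. -/
open Filter Set Topology

/-- If `O` is open and dense in `X × Y`, `U` is nonempty open in `X` and `V 1, …, V m`
are nonempty open in `Y`, then there are a nonempty open `W ⊆ U` and points `z i ∈ V i`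
with `W × {z 1, …, z m} ⊆ O`. -/
theorem exists_open_subset_and_points {X Y : Type*} [TopologicalSpace X]
    [TopologicalSpace Y]
    (O : Set (X × Y)) (hOopen : IsOpen O) (hOdense : Dense O)
    (U : Set X) (hUopen : IsOpen U) (hUne : U.Nonempty)
    (m : ℕ) (V : Fin m → Set Y) (hV : ∀ i, IsOpen (V i) ∧ (V i).Nonempty) :
    ∃ W : Set X, IsOpen W ∧ W.Nonempty ∧ W ⊆ U ∧
      ∃ z : Fin m → Y, ∀ i, z i ∈ V i ∧ ∀ w ∈ W, (w, z i) ∈ O := by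
  induction m with
  | zero => exact ⟨U, hUopen, hUne, subset_rfl, Fin.elim0, fun i => i.elim0⟩
  | succ n ih =>
    obtain ⟨W, hWo, hWne, hWU, z, hz⟩ :=
      ih (fun i => V i.castSucc) (fun i => hV i.castSucc)
    have hne : ((W ×ˢ V (Fin.last n)) ∩ O).Nonempty :=
      hOdense.inter_open_nonempty _ (hWo.prod (hV _).1) (hWne.prod (hV _).2)
    obtain ⟨⟨w, y⟩, ⟨hwW, hyV⟩, hO⟩ := hne
    refine ⟨W ∩ {x | (x, y) ∈ O},
      hWo.inter (hOopen.preimage (Continuous.prodMk_left y)),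
      ⟨w, hwW, hO⟩, inter_subset_left.trans hWU, Fin.snoc z y, ?_⟩
    intro i
    refine Fin.lastCases ?_ ?_ i
    · rw [Fin.snoc_last]
      exact ⟨hyV, fun w' hw' => hw'.2⟩
    · intro j
      rw [Fin.snoc_castSucc]
      exact ⟨(hz j).1, fun w' hw' => (hz j).2 w' hw'.1⟩
end

section
/- Let X be a Baire space, and let Y be a W̃-space which possesses a rich family 𝔉 all of whose members are Baire spaces. Then X × Y (with the product topology) is a Baire space. -/
open Filter Set Topology

/-!
Fix dense open sets `O k ⊆ X × Y` and a box `U₀ ×ˢ V₀`. In a Banach–Mazur game in `X`, answer each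
move by a smaller open `u` that comes with an open `V ⊆ Y` such that `u ×ˢ V ⊆ O k`. As `X` is
Baire, Oxtoby's argument yields a play whose answers share a point `x`, so `{x} ×ˢ V ⊆ O k` for all
these `V`. The points of `Y` chosen in the `V` are the moves of countably many interleaved
W̃-games, one for each `k` and each point of countable dense subsets of a chain of members of the
rich family absorbing every point played. The closure `F` of the chain is a Baire member of the
family, and for each `k` the union of the `V` attached to `O k` is open and dense in `F`; hence
some `z ∈ V₀` lies in all these unions, and `(x, z) ∈ (U₀ ×ˢ V₀) ∩ ⋂ k, O k`.
-/

theorem Set.exists_pairwiseDisjoint_maximal {ι α : Type*} (P : Set ι) (R : ι → Set α) :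
    ∃ M ⊆ P, M.PairwiseDisjoint R ∧ ∀ i ∈ P, (R i).Nonempty → ∃ j ∈ M, (R i ∩ R j).Nonempty := by
  obtain ⟨M, hM⟩ := zorn_subset {M | M ⊆ P ∧ M.PairwiseDisjoint R} fun c hc hchain =>
    ⟨⋃₀ c, ⟨sUnion_subset fun M hM => (hc hM).1,
      (pairwiseDisjoint_sUnion hchain.directedOn).2 fun M hM => (hc hM).2⟩,
      fun _ => subset_sUnion_of_mem⟩
  refine ⟨M, hM.prop.1, hM.prop.2, fun i hi hRi => ?_⟩
  by_contra! hdisj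
  have hiM : i ∉ M := fun hiM => hRi.ne_empty (by simpa using hdisj i hiM)
  have hins : insert i M ∈ {M | M ⊆ P ∧ M.PairwiseDisjoint R} :=
    ⟨insert_subset hi hM.prop.1, hM.prop.2.insert fun j hj _ =>
      disjoint_iff_inter_eq_empty.2 (hdisj j hj)⟩
  exact hiM (hM.2 hins (subset_insert i M) (mem_insert i M))

theorem subset_closure_inter_iInter {Y : Type*} [TopologicalSpace Y] {F : Set Y} [BaireSpace F]
    {G : ℕ → Set Y} (hG : ∀ n, IsOpen (G n)) (hGF : ∀ n, F ⊆ closure (F ∩ G n)) :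
    F ⊆ closure (F ∩ ⋂ n, G n) := by
  have hdense : ∀ n, Dense ((↑) ⁻¹' G n : Set F) := fun n => by
    rw [Subtype.dense_iff, Subtype.image_preimage_coe]
    exact hGF n
  have := dense_iInter_of_isOpen (fun n => (hG n).preimage continuous_subtype_val) hdense
  rwa [Subtype.dense_iff, ← preimage_iInter, Subtype.image_preimage_coe] at this

section BanachMazur

variable {X S : Type*}

/-- The positions reached after `n` rounds when player I answers with `next` and player II only
plays moves from `M`. -/
def playTree (next : ℕ → Set X → S → S) (M : ℕ → S → Set (Set X)) (s₀ : S) : ℕ → Set S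
  | 0 => {s₀}
  | n + 1 => ⋃ s ∈ playTree next M s₀ n, (next n · s) '' M n s

variable {U : S → Set X} {next : ℕ → Set X → S → S} {M : ℕ → S → Set (Set X)} {s₀ : S}

theorem pairwiseDisjoint_playTree (hshrink : ∀ n s, ∀ A ∈ M n s, U (next n A s) ⊆ U s)
    (hdisj : ∀ n s, (M n s).PairwiseDisjoint fun A => U (next n A s)) (n : ℕ) :
    (playTree next M s₀ n).PairwiseDisjoint U := by
  induction n with
  | zero => exact pairwiseDisjoint_singleton s₀ U
  | succ n ih =>
    refine PairwiseDisjoint.biUnion (ih.mono_on fun s _ => ?_) fun s _ =>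
      Set.Pairwise.image (f := (next n · s)) (hdisj n s)
    rintro x ⟨_, ⟨t, rfl⟩, _, ⟨⟨A, hA, rfl⟩, rfl⟩, hx⟩
    exact hshrink n s A hA hx

theorem subset_closure_playTree [TopologicalSpace X]
    (hdense : ∀ n, ∀ s ∈ playTree next M s₀ n, U s ⊆ closure (⋃ A ∈ M n s, U (next n A s)))
    (n : ℕ) : U s₀ ⊆ closure (⋃ s ∈ playTree next M s₀ n, U s) := by
  induction n with
  | zero => simpa [playTree] using subset_closure
  | succ n ih =>
    refine ih.trans (closure_minimal (iUnion₂_subset fun s hs => (hdense n s hs).trans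
      (closure_mono (iUnion₂_subset fun A hA => ?_))) isClosed_closure)
    exact subset_biUnion_of_mem (u := U) (mem_biUnion hs (mem_image_of_mem _ hA))

theorem exists_branch_playTree (hshrink : ∀ n s, ∀ A ∈ M n s, U (next n A s) ⊆ U s)
    (hdisj : ∀ n, (playTree next M s₀ n).PairwiseDisjoint U) {x : X}
    (hx : ∀ n, x ∈ ⋃ s ∈ playTree next M s₀ n, U s) :
    ∃ (A : ℕ → Set X) (s : ℕ → S), s 0 = s₀ ∧ (∀ n, s (n + 1) = next n (A n) (s n)) ∧
      (∀ n, A n ∈ M n (s n)) ∧ ∀ n, x ∈ U (s n) := by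
  choose s hsT hxs using fun n => mem_iUnion₂.1 (hx n)
  have hstep : ∀ n, ∃ A ∈ M n (s n), s (n + 1) = next n A (s n) := by
    intro n
    obtain ⟨t, ht, A, hA, hts : next n A t = s (n + 1)⟩ := mem_iUnion₂.1 (hsT (n + 1))
    obtain rfl : t = s n :=
      (hdisj n).elim_set ht (hsT n) x (hshrink n t A hA (hts ▸ hxs (n + 1))) (hxs n)
    exact ⟨A, hA, hts.symm⟩
  choose A hA hAs using hstep
  exact ⟨A, s, hsT 0, hAs, hA, hxs⟩

/-- Oxtoby: in a Baire space, no strategy `next` of player I in the Banach–Mazur game forces the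
answers to have empty intersection. -/
theorem BaireSpace.exists_play_nonempty_iInter [TopologicalSpace X] [BaireSpace X] (U : S → Set X)
    (next : ℕ → Set X → S → S) {s₀ : S} (hs₀ : IsOpen (U s₀)) (hs₀ne : (U s₀).Nonempty)
    (hnext : ∀ n A s, IsOpen A → A.Nonempty →
      IsOpen (U (next n A s)) ∧ (U (next n A s)).Nonempty ∧ U (next n A s) ⊆ A) :
    ∃ (A : ℕ → Set X) (s : ℕ → S), s 0 = s₀ ∧ (∀ n, s (n + 1) = next n (A n) (s n)) ∧
      (∀ n, IsOpen (A n) ∧ (A n).Nonempty) ∧ (⋂ n, U (s n)).Nonempty := by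
  choose M hM_sub hM_disj hM_max using fun n s =>
    exists_pairwiseDisjoint_maximal {A | IsOpen A ∧ A.Nonempty ∧ A ⊆ U s} (U <| next n · s)
  have hshrink : ∀ n s, ∀ A ∈ M n s, U (next n A s) ⊆ U s := fun n s A hA =>
    (hnext n A s (hM_sub n s hA).1 (hM_sub n s hA).2.1).2.2.trans (hM_sub n s hA).2.2
  have hopen : ∀ n, ∀ s ∈ playTree next M s₀ n, IsOpen (U s) := by
    rintro (_ | n) s hs
    · rwa [mem_singleton_iff.1 hs]
    · obtain ⟨t, -, A, hA, rfl⟩ := mem_iUnion₂.1 hs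
      exact (hnext n A t (hM_sub n t hA).1 (hM_sub n t hA).2.1).1
  have hdense : ∀ n, ∀ s ∈ playTree next M s₀ n,
      U s ⊆ closure (⋃ A ∈ M n s, U (next n A s)) := by
    intro n s hs x hx
    refine mem_closure_iff.2 fun o ho hxo => ?_
    have hG : IsOpen (o ∩ U s) := ho.inter (hopen n s hs)
    obtain ⟨-, hGne, hGsub⟩ := hnext n (o ∩ U s) s hG ⟨x, hxo, hx⟩
    obtain ⟨A, hA, y, hyG, hyA⟩ :=
      hM_max n s (o ∩ U s) ⟨hG, ⟨x, hxo, hx⟩, inter_subset_right⟩ hGne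
    exact ⟨y, (hGsub hyG).1, mem_biUnion hA hyA⟩
  have := hs₀.baireSpace
  obtain ⟨x, -, hx⟩ := closure_nonempty_iff.1 <| hs₀ne.mono <|
    subset_closure_inter_iInter (fun n => isOpen_biUnion (hopen n)) fun n =>
      (subset_inter subset_rfl (subset_closure_playTree hdense n)).trans hs₀.inter_closure
  obtain ⟨A, s, hs0, hsn, hA, hxs⟩ :=
    exists_branch_playTree hshrink (pairwiseDisjoint_playTree hshrink hM_disj) (mem_iInter.1 hx)
  exact ⟨A, s, hs0, hsn, fun n => ⟨(hM_sub _ _ (hA n)).1, (hM_sub _ _ (hA n)).2.1⟩,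
    x, mem_iInter.2 hxs⟩

end BanachMazur

theorem apply_eq_of_update_succ {Y : Type*} {h : ℕ → ℕ → Y}
    (hh : ∀ n, h (n + 1) = Function.update (h n) n (h (n + 1) n)) {i n : ℕ} (hi : i < n) :
    h n i = h (i + 1) i := by
  induction n, hi using Nat.le_induction with
  | base => rfl
  | succ n hin ih => rw [hh n, Function.update_of_ne (by omega), ih]

section Product

variable {X Y : Type*} [TopologicalSpace X] [TopologicalSpace Y]

theorem Dense.exists_open_prod_subset {O : Set (X × Y)} (hd : Dense O) (hO : IsOpen O)
    {A : Set X} {B : Set Y} (hA : IsOpen A) (hB : IsOpen B) (hAne : A.Nonempty)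
    (hBne : B.Nonempty) :
    ∃ u v, IsOpen u ∧ IsOpen v ∧ u.Nonempty ∧ v.Nonempty ∧ u ⊆ A ∧ v ⊆ B ∧ u ×ˢ v ⊆ O := by
  obtain ⟨⟨x, y⟩, hxy, hxyO⟩ := hd.inter_open_nonempty (A ×ˢ B) (hA.prod hB) (hAne.prod hBne)
  obtain ⟨u, v, hu, hv, hx, hy, huv⟩ := isOpen_prod_iff.1 hO x y hxyO
  exact ⟨u ∩ A, v ∩ B, hu.inter hA, hv.inter hB, ⟨x, hx, hxy.1⟩, ⟨y, hy, hxy.2⟩,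
    inter_subset_right, inter_subset_right,
    (prod_mono inter_subset_left inter_subset_left).trans huv⟩

theorem BaireSpace.exists_mem_forall_prod_subset [BaireSpace X] [Nonempty Y]
    {O : ℕ → Set (X × Y)} (hO : ∀ n, IsOpen (O n)) (hd : ∀ n, Dense (O n)) {U : Set X}
    (hU : IsOpen U) (hUne : U.Nonempty) {Q : (ℕ → Y) → ℕ → Set Y}
    (hQ : ∀ ys n, IsOpen (Q ys n) ∧ (Q ys n).Nonempty)
    (hQ_congr : ∀ ys ys' n, (∀ i < n, ys i = ys' i) → Q ys n = Q ys' n) :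
    ∃ x ∈ U, ∃ (ys : ℕ → Y) (V : ℕ → Set Y),
      (∀ n, IsOpen (V n) ∧ ys n ∈ V n ∧ V n ⊆ Q ys n) ∧ ∀ n, {x} ×ˢ V n ⊆ O n := by
  have hbox : ∀ n (A : Set X) (B : Set Y), ∃ (u : Set X) (v : Set Y) (y : Y),
      IsOpen A → A.Nonempty → IsOpen B → B.Nonempty →
      IsOpen u ∧ u.Nonempty ∧ u ⊆ A ∧ IsOpen v ∧ y ∈ v ∧ v ⊆ B ∧ u ×ˢ v ⊆ O n := by
    intro n A B
    by_cases h : IsOpen A ∧ A.Nonempty ∧ IsOpen B ∧ B.Nonempty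
    · obtain ⟨u, v, hu, hv, hune, ⟨y, hy⟩, huA, hvB, huv⟩ :=
        (hd n).exists_open_prod_subset (hO n) h.1 h.2.2.1 h.2.1 h.2.2.2
      exact ⟨u, v, y, fun _ _ _ _ => ⟨hu, hune, huA, hv, hy, hvB, huv⟩⟩
    · exact ⟨∅, ∅, Classical.arbitrary Y, fun hA hAne hB hBne => (h ⟨hA, hAne, hB, hBne⟩).elim⟩
  choose u v y hbox using hbox
  -- A position of the game in `X` is the history of points of `Y` together with the last answer.
  obtain ⟨A, s, hs0, hsn, hA, x, hx⟩ := BaireSpace.exists_play_nonempty_iInter Prod.snd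
    (fun n A (s : (ℕ → Y) × Set X) => (Function.update s.1 n (y n A (Q s.1 n)), u n A (Q s.1 n)))
    (s₀ := (fun _ => Classical.arbitrary Y, U)) hU hUne fun n A s hA hAne =>
      let h := hbox n A (Q s.1 n) hA hAne (hQ _ _).1 (hQ _ _).2
      ⟨h.1, h.2.1, h.2.2.1⟩
  set ys : ℕ → Y := fun n => (s (n + 1)).1 n
  have hhist : ∀ n, ∀ i < n, (s n).1 i = ys i := fun n i =>
    apply_eq_of_update_succ (h := fun n => (s n).1) fun n => by rw [hsn]; simp
  have hsucc : ∀ n, s (n + 1) =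
      (Function.update (s n).1 n (y n (A n) (Q ys n)), u n (A n) (Q ys n)) := fun n => by
    rw [hsn, hQ_congr _ _ n (hhist n)]
  have hys : ∀ n, ys n = y n (A n) (Q ys n) := fun n => by
    change (s (n + 1)).1 n = _
    rw [hsucc]
    exact Function.update_self ..
  refine ⟨x, by simpa [hs0] using mem_iInter.1 hx 0, ys, fun n => v n (A n) (Q ys n),
    fun n => ?_, fun n => ?_⟩ <;>
    obtain ⟨-, -, -, hv, hy, hvQ, huv⟩ :=
      hbox n (A n) (Q ys n) (hA n).1 (hA n).2 (hQ _ _).1 (hQ _ _).2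
  · exact ⟨hv, hys n ▸ hy, hvQ⟩
  · have hxu : x ∈ u n (A n) (Q ys n) := by simpa [hsucc] using mem_iInter.1 hx (n + 1)
    exact (prod_mono (singleton_subset_iff.2 hxu) subset_rfl).trans huv

end Product

section Runs

variable {Y : Type*} {𝓕 : Set (Set Y)}

def memberChain (absorb : 𝓕 → Y → 𝓕) (F₀ : 𝓕) (ys : ℕ → Y) : ℕ → 𝓕
  | 0 => F₀
  | i + 1 => absorb (memberChain absorb F₀ ys i) (ys i)

/-- Stage `n` is round `(unpair n).2` of run `r = (unpair n).1`. Run `r = pair k (pair i m)` is the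
game `G̃(e)` at the `m`-th point `e` of the enumeration of the `i`-th member of the chain, and its
moves are the points whose neighbourhoods are put into the `k`-th dense open set. -/
def runQuery (σ : Y → List Y → Set Y) (absorb : 𝓕 → Y → 𝓕) (enum : 𝓕 → ℕ → Y) (F₀ : 𝓕)
    (ys : ℕ → Y) (n : ℕ) : Set Y :=
  let r := (Nat.unpair n).1
  let j := (Nat.unpair r).2
  σ (enum (memberChain absorb F₀ ys (Nat.unpair j).1) (Nat.unpair j).2)
    (List.ofFn fun b : Fin (Nat.unpair n).2 => ys (Nat.pair r b))

variable {σ : Y → List Y → Set Y} {absorb : 𝓕 → Y → 𝓕} {enum : 𝓕 → ℕ → Y} {F₀ : 𝓕}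

theorem memberChain_congr {ys ys' : ℕ → Y} {i : ℕ} (h : ∀ j < i, ys j = ys' j) :
    memberChain absorb F₀ ys i = memberChain absorb F₀ ys' i := by
  induction i with
  | zero => rfl
  | succ i ih =>
    rw [memberChain, memberChain, ih fun j hj => h j (hj.trans i.lt_succ_self), h i i.lt_succ_self]

theorem runQuery_congr {ys ys' : ℕ → Y} {n : ℕ} (h : ∀ i < n, ys i = ys' i) :
    runQuery σ absorb enum F₀ ys n = runQuery σ absorb enum F₀ ys' n := by
  have hchain : (Nat.unpair (Nat.unpair (Nat.unpair n).1).2).1 ≤ n :=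
    (Nat.unpair_left_le _).trans ((Nat.unpair_right_le _).trans (Nat.unpair_left_le n))
  have hround : ∀ b < (Nat.unpair n).2, Nat.pair (Nat.unpair n).1 b < n := fun b hb =>
    (Nat.pair_lt_pair_right _ hb).trans_eq (Nat.pair_unpair n)
  simp only [runQuery, memberChain_congr fun j hj => h j (hj.trans_le hchain)]
  congr 2
  exact funext fun b => h _ (hround b b.2)

end Runs

section RichFamily

variable {Y : Type*} [TopologicalSpace Y]

theorem SeparableSubspace.of_countable {s : Set Y} (hs : s.Countable) : SeparableSubspace s :=
  ⟨s, subset_rfl, hs, subset_closure⟩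

theorem SeparableSubspace.insert {s : Set Y} (hs : SeparableSubspace s) (y : Y) :
    SeparableSubspace (insert y s) := by
  obtain ⟨c, hcs, hc, hsc⟩ := hs
  exact ⟨_, insert_subset_insert hcs, hc.insert y, insert_subset_iff.2
    ⟨subset_closure (mem_insert y c), hsc.trans (closure_mono (subset_insert y c))⟩⟩

theorem SeparableSubspace.exists_subset_closure_range [Nonempty Y] {s : Set Y}
    (hs : SeparableSubspace s) : ∃ d : ℕ → Y, s ⊆ closure (range d) := by
  obtain ⟨c, -, hc, hsc⟩ := hs
  obtain ⟨d, hd⟩ := countable_iff_exists_subset_range.1 hc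
  exact ⟨d, hsc.trans (closure_mono hd)⟩

variable {𝓕 : Set (Set Y)}

theorem IsRichFamily.exists_insert_subset (h𝓕 : IsRichFamily 𝓕) (F : 𝓕) (y : Y) :
    ∃ F' : 𝓕, insert y (F : Set Y) ⊆ F' := by
  obtain ⟨F', hF', hsub⟩ := h𝓕.2.1 _ ((h𝓕.1 F F.2).2.2.insert y)
  exact ⟨⟨F', hF'⟩, hsub⟩

variable {σ : Y → List Y → Set Y} {absorb : 𝓕 → Y → 𝓕} {enum : 𝓕 → ℕ → Y} {F₀ : 𝓕}

theorem exists_mem_forall_of_subset_runQuery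
    (hσ : ∀ y p, (∀ n, p n ∈ σ y (List.ofFn fun i : Fin n => p i)) → MapClusterPt y atTop p)
    (h𝓕 : IsRichFamily 𝓕) (hBaire : ∀ F ∈ 𝓕, BaireSpace F)
    (habsorb : ∀ (F : 𝓕) y, insert y (F : Set Y) ⊆ absorb F y)
    (henum : ∀ F : 𝓕, (F : Set Y) ⊆ closure (range (enum F))) {ys : ℕ → Y} {V : ℕ → Set Y}
    (hV : ∀ n, IsOpen (V n) ∧ ys n ∈ V n ∧ V n ⊆ runQuery σ absorb enum F₀ ys n)
    {V₀ : Set Y} (hV₀ : IsOpen V₀) (hV₀F₀ : (V₀ ∩ F₀).Nonempty) :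
    ∃ z ∈ V₀, ∀ k, ∃ n, (Nat.unpair (Nat.unpair n).1).1 = k ∧ z ∈ V n := by
  set C := memberChain absorb F₀ ys
  set F := closure (⋃ i, (C i : Set Y))
  have hC_mono : Monotone fun i => (C i : Set Y) :=
    monotone_nat_of_le_succ fun i => (subset_insert _ _).trans (habsorb (C i) (ys i))
  have hF : F ∈ 𝓕 := h𝓕.2.2 _ (fun i => (C i).2) hC_mono
  have := hBaire F hF
  set G : ℕ → Set Y := fun k => ⋃ (n) (_ : (Nat.unpair (Nat.unpair n).1).1 = k), V n
  have hG : ∀ k, IsOpen (G k) := fun k => isOpen_iUnion fun n => isOpen_iUnion fun _ => (hV n).1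
  have hys : ∀ n, ys n ∈ F := fun n =>
    subset_closure (mem_iUnion.2 ⟨n + 1, habsorb (C n) (ys n) (mem_insert _ _)⟩)
  have htarget : ∀ k i m, enum (C i) m ∈ closure (F ∩ G k) := by
    intro k i m
    set r := Nat.pair k (Nat.pair i m)
    have hrun : ∀ b, ys (Nat.pair r b) ∈ F ∩ G k := fun b =>
      ⟨hys _, mem_iUnion₂.2 ⟨_, by simp [r], (hV _).2.1⟩⟩
    have hclus : MapClusterPt (enum (C i) m) atTop fun b => ys (Nat.pair r b) :=
      hσ _ _ fun b => by simpa [runQuery, C, r] using (hV (Nat.pair r b)).2.2 (hV _).2.1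
    exact mem_closure_iff_clusterPt.2 (ClusterPt.mono hclus (tendsto_principal.2 (.of_forall hrun)))
  have hGF : ∀ k, F ⊆ closure (F ∩ G k) := fun k =>
    closure_minimal (iUnion_subset fun i => (henum _).trans
      (closure_minimal (range_subset_iff.2 (htarget k i)) isClosed_closure)) isClosed_closure
  obtain ⟨y₀, hy₀V, hy₀F⟩ := hV₀F₀
  obtain ⟨z, hzV, -, hzG⟩ := mem_closure_iff.1
    (subset_closure_inter_iInter hG hGF (subset_closure (mem_iUnion.2 ⟨0, hy₀F⟩))) V₀ hV₀ hy₀V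
  exact ⟨z, hzV, fun k => by simpa [G] using mem_iInter.1 hzG k⟩

end RichFamily

/-- If `X` is a Baire space and `Y` is a W̃-space possessing a rich family of Baire
subspaces, then `X × Y` is a Baire space. -/
theorem baireSpace_prod_of_wtilde {X Y : Type*} [TopologicalSpace X] [TopologicalSpace Y]
    [BaireSpace X]
    (hY : ∀ y : Y, IsWtildePoint y)
    (𝓕 : Set (Set Y)) (h𝓕 : IsRichFamily 𝓕)
    (hBaire : ∀ F ∈ 𝓕, BaireSpace F) :
    BaireSpace (X × Y) := by
  refine ⟨fun f hfo hfd => dense_iff_inter_open.2 fun W hW ⟨⟨x₀, y₀⟩, hxy₀⟩ => ?_⟩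
  obtain ⟨U₀, V₀, hU₀, hV₀, hx₀, hy₀, hUV⟩ := isOpen_prod_iff.1 hW x₀ y₀ hxy₀
  have : Nonempty Y := ⟨y₀⟩
  choose σ hσ hσ_win using hY
  choose absorb habsorb using h𝓕.exists_insert_subset
  choose enum henum using fun F : 𝓕 => (h𝓕.1 F F.2).2.2.exists_subset_closure_range
  obtain ⟨F₀, hF₀, hy₀F₀⟩ := h𝓕.2.1 {y₀} (.of_countable (countable_singleton y₀))
  obtain ⟨x, hx, ys, V, hV, hxV⟩ := BaireSpace.exists_mem_forall_prod_subset
    (O := fun n => f (Nat.unpair (Nat.unpair n).1).1) (fun _ => hfo _) (fun _ => hfd _) hU₀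
    ⟨x₀, hx₀⟩ (Q := runQuery σ absorb enum ⟨F₀, hF₀⟩) (fun _ _ => hσ _ _)
    fun _ _ _ => runQuery_congr
  obtain ⟨z, hz, hzV⟩ := exists_mem_forall_of_subset_runQuery hσ_win h𝓕 hBaire habsorb henum hV
    hV₀ ⟨y₀, hy₀, hy₀F₀ rfl⟩
  refine ⟨(x, z), hUV ⟨hx, hz⟩, mem_iInter.2 fun k => ?_⟩
  obtain ⟨n, rfl, hzn⟩ := hzV k
  exact hxV n ⟨rfl, hzn⟩
end

section
/- Let X, Y and Z be topological spaces and let f : X × Y → Z be a separately continuous function. If X is a Baire space, Z is a regular space, and y₀ ∈ Y is a W̃-point of Y, then f is quasi-continuous at each point of X × {y₀}. -/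
open Filter Set Topology

/-- `g` is quasi-continuous at `w₀`: for all open neighborhoods `U` of `w₀` and `V` of
`g w₀` there is a nonempty open `O ⊆ U` with `g '' O ⊆ V`. -/
def QuasiContinuousAt {W Z : Type*} [TopologicalSpace W] [TopologicalSpace Z]
    (g : W → Z) (w₀ : W) : Prop :=
  ∀ U : Set W, IsOpen U → w₀ ∈ U → ∀ V : Set Z, IsOpen V → g w₀ ∈ V →
    ∃ O : Set W, IsOpen O ∧ O.Nonempty ∧ O ⊆ U ∧ g '' O ⊆ V

/-!
If `f` is not quasi-continuous at `(x, y₀)`, regularity of `Z` gives a box `A₀ ×ˢ B` around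
`(x, y₀)` and a closed neighbourhood `t` of `f (x, y₀)` such that `f` maps no nonempty open
subset of the box into `t`. Hence, on a dense set of points `x'` of
`A = A₀ ∩ f (·, y₀) ⁻¹' interior t`, player II can answer every move `σ h` of player I with some
`y` such that `y ∈ B → f (x', y) ∉ t`. Choosing these answers locally constantly, via maximal
disjoint families of open sets, produces open sets `Dₙ ⊆ A`, dense in `A`, on which the first
`n` answers are defined. Since `X` is Baire, some `x₁ ∈ A` lies in every `Dₙ` and so follows a
play `p` of `σ`. But `y₀` is a cluster point of `p` and `f (x₁, y₀) ∈ interior t`, so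
`p n ∈ B` and `f (x₁, p n) ∈ t` for some `n`, a contradiction.
-/

theorem Set.exists_maximal_pairwiseDisjoint {α : Type*} (𝒜 : Set (Set α)) :
    ∃ 𝒥, Maximal (fun 𝒥 : Set (Set α) => 𝒥 ⊆ 𝒜 ∧ 𝒥.PairwiseDisjoint id) 𝒥 := by
  refine zorn_subset _ fun c hc hchain => ⟨⋃₀ c, ⟨?_, ?_⟩, fun _ => subset_sUnion_of_mem⟩
  · exact sUnion_subset fun 𝒥 h𝒥 => (hc h𝒥).1
  · exact (hchain.pairwiseDisjoint_sUnion id).2 fun 𝒥 h𝒥 => (hc h𝒥).2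

section

variable {X Y : Type*} [TopologicalSpace X]

theorem exists_dense_open_locallyConstant_selection [Nonempty Y] {G : Set X} (hG : IsOpen G)
    {R : X → Y → Prop}
    (hR : ∀ J, IsOpen J → J.Nonempty → J ⊆ G →
      ∃ J' ⊆ J, IsOpen J' ∧ J'.Nonempty ∧ ∃ y, ∀ x ∈ J', R x y) :
    ∃ (D : Set X) (c : X → Y), D ⊆ G ∧ G ⊆ closure D ∧
      ∀ x ∈ D, R x (c x) ∧ ∀ᶠ x' in 𝓝 x, x' ∈ D ∧ c x' = c x := by
  set 𝒜 : Set (Set X) := {J | IsOpen J ∧ J.Nonempty ∧ J ⊆ G ∧ ∃ y, ∀ x ∈ J, R x y}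
  obtain ⟨𝒥, ⟨h𝒥𝒜, h𝒥disj⟩, h𝒥max⟩ := 𝒜.exists_maximal_pairwiseDisjoint
  choose! y hy using fun J (hJ : J ∈ 𝒜) => hJ.2.2.2
  choose! J hJ hxJ using fun x (hx : x ∈ ⋃₀ 𝒥) => mem_sUnion.1 hx
  refine ⟨⋃₀ 𝒥, fun x => y (J x), sUnion_subset fun K hK => (h𝒥𝒜 hK).2.2.1, ?_, ?_⟩
  · intro x hxG
    refine mem_closure_iff.2 fun o ho hxo => not_disjoint_iff_nonempty_inter.1 fun hdisj => ?_
    obtain ⟨J', hJ'o, hJ'open, hJ'ne, y', hy'⟩ :=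
      hR (o ∩ G) (ho.inter hG) ⟨x, hxo, hxG⟩ inter_subset_right
    have hJ'𝒥 : ∀ K ∈ 𝒥, Disjoint J' K := fun K hK =>
      (hdisj.mono_left (hJ'o.trans inter_subset_left)).mono_right (subset_sUnion_of_mem hK)
    have hJ'mem : J' ∈ 𝒥 := h𝒥max
      ⟨insert_subset ⟨hJ'open, hJ'ne, hJ'o.trans inter_subset_right, y', hy'⟩ h𝒥𝒜,
        h𝒥disj.insert fun K hK _ => hJ'𝒥 K hK⟩ (subset_insert _ _) (mem_insert _ _)
    exact hJ'ne.ne_empty (disjoint_self.1 (hJ'𝒥 J' hJ'mem))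
  · intro x hx
    refine ⟨hy _ (h𝒥𝒜 (hJ x hx)) x (hxJ x hx), ?_⟩
    filter_upwards [(h𝒥𝒜 (hJ x hx)).1.mem_nhds (hxJ x hx)] with x' hx'
    have hx'D : x' ∈ ⋃₀ 𝒥 := ⟨J x, hJ x hx, hx'⟩
    have hJx' : J x' = J x :=
      h𝒥disj.elim (hJ x' hx'D) (hJ x hx) (not_disjoint_iff.2 ⟨x', hxJ x' hx'D, hx'⟩)
    exact ⟨hx'D, congrArg y hJx'⟩

theorem dense_union_compl_closure {A D : Set X} (h : A ⊆ closure D) :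
    Dense (D ∪ (closure A)ᶜ) :=
  dense_iff_closure_eq.2 <| eq_univ_of_forall fun x => by
    rw [closure_union]
    by_cases hx : x ∈ closure A
    · exact Or.inl (closure_minimal h isClosed_closure hx)
    · exact Or.inr (subset_closure hx)

theorem exists_refinement_of_dense_moves [Nonempty Y] {A : Set X} {S : List Y → Set Y}
    {O : Y → Set X} (hO : ∀ y, IsOpen (O y))
    (hS : ∀ h J, IsOpen J → J.Nonempty → J ⊆ A → ∃ y ∈ S h, (O y ∩ J).Nonempty)
    {D : Set X} {g : X → List Y} (hDA : D ⊆ A)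
    (hg : ∀ x ∈ D, ∀ᶠ x' in 𝓝 x, x' ∈ D ∧ g x' = g x) :
    ∃ (D' : Set X) (c : X → Y), D' ⊆ D ∧ D ⊆ closure D' ∧
      ∀ x ∈ D', (c x ∈ S (g x) ∧ x ∈ O (c x)) ∧ ∀ᶠ x' in 𝓝 x, x' ∈ D' ∧ c x' = c x := by
  refine exists_dense_open_locallyConstant_selection (R := fun x y => y ∈ S (g x) ∧ x ∈ O y)
    (isOpen_iff_eventually.2 fun x hx => (hg x hx).mono fun _ => And.left) ?_
  rintro J hJ ⟨x₀, hx₀⟩ hJD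
  obtain ⟨J₁, hJ₁sub, hJ₁open, hx₀J₁⟩ :=
    mem_nhds_iff.1 (inter_mem (hJ.mem_nhds hx₀) (hg x₀ (hJD hx₀)))
  obtain ⟨y, hyS, hyJ₁⟩ := hS (g x₀) J₁ hJ₁open ⟨x₀, hx₀J₁⟩ fun x hx => hDA (hJ₁sub hx).2.1
  refine ⟨O y ∩ J₁, fun x hx => (hJ₁sub hx.2).1, (hO y).inter hJ₁open, hyJ₁, y,
    fun x hx => ⟨?_, hx.1⟩⟩
  rw [(hJ₁sub hx.2).2.2]
  exact hyS

theorem exists_mem_play_of_dense_moves [BaireSpace X] [Nonempty Y] {A : Set X} (hA : IsOpen A)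
    (hAne : A.Nonempty) {S : List Y → Set Y} {O : Y → Set X} (hO : ∀ y, IsOpen (O y))
    (hS : ∀ h J, IsOpen J → J.Nonempty → J ⊆ A → ∃ y ∈ S h, (O y ∩ J).Nonempty) :
    ∃ x ∈ A, ∃ p : ℕ → Y, ∀ n, p n ∈ S (List.ofFn fun i : Fin n => p i) ∧ x ∈ O (p n) := by
  choose! D' c hD'D hDD' hc using fun (D : Set X) (g : X → List Y) (hDA : D ⊆ A)
    (hg : ∀ x ∈ D, ∀ᶠ x' in 𝓝 x, x' ∈ D ∧ g x' = g x) =>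
    exists_refinement_of_dense_moves hO hS hDA hg
  -- `stage n = (Dₙ, gₙ)`, where `gₙ x` is the partial play of length `n` followed by `x ∈ Dₙ`.
  let stage : ℕ → Set X × (X → List Y) := fun n =>
    n.rec (A, fun _ => []) fun _ s => (D' s.1 s.2, fun x => s.2 x ++ [c s.1 s.2 x])
  have hstage : ∀ n, (stage n).1 ⊆ A ∧ A ⊆ closure (stage n).1 ∧
      ∀ x ∈ (stage n).1, ∀ᶠ x' in 𝓝 x, x' ∈ (stage n).1 ∧ (stage n).2 x' = (stage n).2 x := by
    intro n
    induction n with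
    | zero => exact ⟨subset_rfl, subset_closure, fun x hx =>
        eventually_of_mem (hA.mem_nhds hx) fun _ h => ⟨h, rfl⟩⟩
    | succ n ih =>
      obtain ⟨hDA, hAD, hg⟩ := ih
      refine ⟨(hD'D _ _ hDA hg).trans hDA,
        hAD.trans (closure_minimal (hDD' _ _ hDA hg) isClosed_closure), fun x hx => ?_⟩
      filter_upwards [(hc _ _ hDA hg x hx).2, hg x (hD'D _ _ hDA hg hx)] with x' h₁ h₂
      exact ⟨h₁.1, congrArg₂ (fun l y => l ++ [y]) h₂.2 h₁.2⟩
  have hopen : ∀ n, IsOpen (stage n).1 := fun n =>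
    isOpen_iff_eventually.2 fun x hx => ((hstage n).2.2 x hx).mono fun _ => And.left
  have hdense : Dense (⋂ n, (stage n).1 ∪ (closure A)ᶜ) := dense_iInter_of_isOpen
    (fun n => (hopen n).union isClosed_closure.isOpen_compl)
    fun n => dense_union_compl_closure (hstage n).2.1
  obtain ⟨x, hxA, hx⟩ := hdense.inter_open_nonempty A hA hAne
  have hxD : ∀ n, x ∈ (stage n).1 := fun n =>
    (mem_iInter.1 hx n).resolve_right (not_not_intro (subset_closure hxA))
  have hhist : ∀ n, (stage n).2 x = List.ofFn fun i : Fin n => c (stage i).1 (stage i).2 x := by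
    intro n
    induction n with
    | zero => rfl
    | succ n ih =>
      rw [List.ofFn_succ', List.concat_eq_append]
      simp only [Fin.val_castSucc, Fin.val_last, ← ih]
      rfl
  refine ⟨x, hxA, fun n => c (stage n).1 (stage n).2 x, fun n => ?_⟩
  rw [← hhist n]
  exact (hc _ _ (hstage n).1 (hstage n).2.2 x (hxD (n + 1))).1

end

theorem isOpen_setOf_mem_imp_apply_notMem {X Y Z : Type*} [TopologicalSpace X]
    [TopologicalSpace Z] {f : X × Y → Z} {t : Set Z} (hf : ∀ y, Continuous fun x : X => f (x, y))
    (ht : IsClosed t) (B : Set Y) (y : Y) : IsOpen {x | y ∈ B → f (x, y) ∉ t} := by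
  by_cases hy : y ∈ B
  · simp only [hy, true_imp_iff]
    exact ht.isOpen_compl.preimage (hf y)
  · simp only [hy, false_imp_iff, ofPred_true, isOpen_univ]

theorem exists_apply_notMem_of_forall_not_image_subset {X Y Z : Type*} [TopologicalSpace X]
    [TopologicalSpace Y] {f : X × Y → Z} {t : Set Z} {A : Set X} {B : Set Y} (hB : IsOpen B)
    (hf : ∀ O, IsOpen O → O.Nonempty → O ⊆ A ×ˢ B → ¬f '' O ⊆ t) {S : Set Y} (hS : IsOpen S)
    (hSne : S.Nonempty) {J : Set X} (hJ : IsOpen J) (hJne : J.Nonempty) (hJA : J ⊆ A) :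
    ∃ y ∈ S, ({x | y ∈ B → f (x, y) ∉ t} ∩ J).Nonempty := by
  by_cases hSB : (S ∩ B).Nonempty
  · obtain ⟨_, ⟨⟨x, y⟩, ⟨hxJ, hyS, -⟩, rfl⟩, hft⟩ := not_subset.1 <|
      hf (J ×ˢ (S ∩ B)) (hJ.prod (hS.inter hB)) (hJne.prod hSB) (prod_mono hJA inter_subset_right)
    exact ⟨y, hyS, x, fun _ => hft, hxJ⟩
  · obtain ⟨y, hy⟩ := hSne
    obtain ⟨x, hx⟩ := hJne
    exact ⟨y, hy, x, fun hyB => absurd ⟨y, hy, hyB⟩ hSB, hx⟩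

/-- If `f : X × Y → Z` is separately continuous, `X` is a Baire space, `Z` is regular
and `y₀` is a W̃-point of `Y`, then `f` is quasi-continuous at every point of
`X × {y₀}`. -/
theorem quasiContinuousAt_of_wtilde_point {X Y Z : Type*} [TopologicalSpace X]
    [TopologicalSpace Y] [TopologicalSpace Z] [BaireSpace X] [RegularSpace Z]
    (f : X × Y → Z)
    (hf₁ : ∀ x : X, Continuous fun y : Y => f (x, y))
    (hf₂ : ∀ y : Y, Continuous fun x : X => f (x, y))
    (y₀ : Y) (hy₀ : IsWtildePoint y₀) :
    ∀ x : X, QuasiContinuousAt f (x, y₀) := by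
  intro x U hU hxU V hV hfV
  by_contra! hcon
  obtain ⟨σ, hσ, hwin⟩ := hy₀
  have : Nonempty Y := ⟨y₀⟩
  obtain ⟨t, ht, htc, htV⟩ := exists_mem_nhds_isClosed_subset (hV.mem_nhds hfV)
  obtain ⟨A₀, B, hA₀, hB, hxA₀, hy₀B, hABU⟩ := isOpen_prod_iff.1 hU x y₀ hxU
  obtain ⟨x₁, hx₁A, p, hp⟩ := exists_mem_play_of_dense_moves
    (hA₀.inter (isOpen_interior.preimage (hf₂ y₀))) ⟨x, hxA₀, mem_interior_iff_mem_nhds.2 ht⟩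
    (isOpen_setOf_mem_imp_apply_notMem hf₂ htc B) fun h _ hJ hJne hJA =>
      exists_apply_notMem_of_forall_not_image_subset hB
        (fun O hO hOne hOU hOt => hcon O hO hOne (hOU.trans hABU) (hOt.trans htV))
        (hσ h).1 (hσ h).2 hJ hJne (hJA.trans inter_subset_left)
  have hnear : ∀ᶠ y in 𝓝 y₀, y ∈ B ∧ f (x₁, y) ∈ t :=
    inter_mem (hB.mem_nhds hy₀B)
      ((hf₁ x₁).continuousAt.preimage_mem_nhds (mem_interior_iff_mem_nhds.1 hx₁A.2))
  obtain ⟨n, hnB, hnt⟩ := ((hwin p fun n => (hp n).1).frequently hnear).exists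
  exact (hp n).2 hnB hnt
end

section
/- Let (G, ·, τ) be a semitopological group. If (G, τ) is a metrisable Baire space, then (G, ·, τ) is a topological group. -/
open Filter Set Topology Metric Function

/-!
A Baire argument in the first variable shows that a separately continuous map `X × Y → Z` into a
metric space is jointly continuous at `(x, y₀)` for residually many `x`. Applied to multiplication
this gives a point `(z, 1)` of joint continuity, and translating by `z⁻¹` moves it to `(1, 1)`.

For inversion, let `1 ∈ closure s`. Since `x * t → t` as `x → 1`, the open sets
`⋃ x ∈ s, {t | dist (x⁻¹ * t) t < r}` are dense, so some `t` lies in all of them for `r = 1/(k+1)`.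
This yields `xₖ ∈ s` with `xₖ⁻¹ * t → t`, i.e. `xₖ⁻¹ → 1`, so `1 ∈ closure s⁻¹`; hence inversion
is continuous at `1`.
-/

theorem Filter.Tendsto.of_forall_dist_lt_one_div {α : Type*} [PseudoMetricSpace α] {u : ℕ → α}
    {a : α} (h : ∀ n, dist (u n) a < 1 / ((n : ℝ) + 1)) : Tendsto u atTop (𝓝 a) :=
  tendsto_iff_dist_tendsto_zero.2 <|
    squeeze_zero (fun _ => dist_nonneg) (fun n => (h n).le) tendsto_one_div_add_atTop_nhds_zero_nat

theorem eventually_residual_continuousAt_uncurry {X Y Z : Type*} [TopologicalSpace X]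
    [BaireSpace X] [TopologicalSpace Y] [PseudoMetricSpace Z] {f : X → Y → Z}
    (hf : ∀ y, Continuous (f · y)) {y₀ : Y} [(𝓝 y₀).IsCountablyGenerated]
    (hy₀ : ∀ x, ContinuousAt (f x) y₀) :
    ∀ᶠ x in residual X, ContinuousAt (uncurry f) (x, y₀) := by
  obtain ⟨U, hU⟩ := (𝓝 y₀).exists_antitone_basis
  set F : ℕ → ℕ → Set X := fun k N =>
    {x | ∀ y ∈ U N, dist (f x y) (f x y₀) ≤ 1 / ((k : ℝ) + 1)}
  have hF_closed (k N : ℕ) : IsClosed (F k N) := by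
    simp only [F, ofPred_forall]
    exact isClosed_biInter fun y _ => isClosed_le ((hf y).dist (hf y₀)) continuous_const
  have hF_cover (k : ℕ) : ⋃ N, F k N = univ := by
    refine eq_univ_of_forall fun x => mem_iUnion.2 ?_
    have := (hy₀ x).eventually (closedBall_mem_nhds (f x y₀) (Nat.one_div_pos_of_nat (n := k)))
    obtain ⟨N, -, hN⟩ := hU.toHasBasis.eventually_iff.1 this
    exact ⟨N, fun y hy => hN hy⟩
  have hres : ∀ᶠ x in residual X, ∀ k, ∃ N, x ∈ interior (F k N) := by
    refine eventually_countable_forall.2 fun k => ?_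
    have := residual_of_dense_open (isOpen_iUnion fun N => isOpen_interior)
      (dense_iUnion_interior_of_closed (hF_closed k) (hF_cover k))
    exact mem_of_superset this fun x hx => mem_iUnion.1 hx
  filter_upwards [hres] with x hx
  refine Metric.tendsto_nhds.2 fun ε hε => ?_
  obtain ⟨k, hk⟩ := exists_nat_one_div_lt (half_pos hε)
  obtain ⟨N, hxN⟩ := hx k
  have hnear : ∀ᶠ x' in 𝓝 x, dist (f x' y₀) (f x y₀) < ε / 2 :=
    Metric.tendsto_nhds.1 (hf y₀).continuousAt _ (half_pos hε)
  filter_upwards [prod_mem_nhds (inter_mem (isOpen_interior.mem_nhds hxN) hnear)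
    (hU.toHasBasis.mem_of_mem (i := N) trivial)] with ⟨x', y⟩ ⟨⟨hx'F, hx'⟩, hy⟩
  calc dist (f x' y) (f x y₀) ≤ dist (f x' y) (f x' y₀) + dist (f x' y₀) (f x y₀) :=
        dist_triangle _ _ _
    _ < ε / 2 + ε / 2 := add_lt_add_of_le_of_lt ((interior_subset hx'F y hy).trans hk.le) hx'
    _ = ε := add_halves ε

theorem tendsto_mul_nhds_one_of_continuousAt {G : Type*} [Group G] [TopologicalSpace G]
    [SeparatelyContinuousMul G] {z : G}
    (hz : ContinuousAt (uncurry ((· * ·) : G → G → G)) (z, 1)) :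
    Tendsto (uncurry ((· * ·) : G → G → G)) (𝓝 1 ×ˢ 𝓝 1) (𝓝 1) := by
  have hshift : Tendsto (Prod.map (z * ·) id) (𝓝 1 ×ˢ 𝓝 1) (𝓝 ((z, 1) : G × G)) := by
    rw [nhds_prod_eq]
    exact ((continuous_const_mul z).tendsto' 1 z (mul_one z)).prodMap tendsto_id
  have := ((continuous_const_mul z⁻¹).tendsto _).comp (hz.tendsto.comp hshift)
  simpa [comp_def, mul_assoc, uncurry_def] using this

theorem continuousAt_inv_of_forall_mem_closure_inv {G : Type*} [TopologicalSpace G]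
    [InvolutiveInv G] {a : G} (h : ∀ s : Set G, a ∈ closure s → a⁻¹ ∈ closure s⁻¹) :
    ContinuousAt (fun x : G => x⁻¹) a := by
  intro U hU
  rw [mem_map, inv_preimage, ← mem_interior_iff_mem_nhds]
  by_contra hU'
  rw [← mem_compl_iff, ← closure_compl] at hU'
  have := h _ hU'
  rw [compl_inv, inv_inv, closure_compl] at this
  exact this (mem_interior_iff_mem_nhds.2 hU)

theorem one_mem_closure_inv_of_one_mem_closure {G : Type*} [Group G] [PseudoMetricSpace G]
    [SeparatelyContinuousMul G] [BaireSpace G] {s : Set G}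
    (hs : (1 : G) ∈ closure s) : (1 : G) ∈ closure s⁻¹ := by
  have hopen (r : ℝ) : IsOpen (⋃ x ∈ s, {t : G | dist (x⁻¹ * t) t < r}) :=
    isOpen_biUnion fun x _ =>
      isOpen_lt ((continuous_const_mul x⁻¹).dist continuous_id) continuous_const
  have hdense (r : ℝ) (hr : 0 < r) : Dense (⋃ x ∈ s, {t : G | dist (x⁻¹ * t) t < r}) := by
    refine dense_iff_inter_open.2 fun V hV ⟨c, hc⟩ => ?_
    have hnear : ∀ᶠ x in 𝓝 (1 : G), x * c ∈ V ∧ dist (x * c) c < r := by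
      have := (continuous_mul_const c).tendsto' 1 c (one_mul c)
      exact (this.eventually (hV.mem_nhds hc)).and (this.eventually (ball_mem_nhds c hr))
    obtain ⟨x, ⟨hxV, hxr⟩, hxs⟩ := mem_closure_iff_nhds.1 hs _ hnear
    exact ⟨x * c, hxV, mem_iUnion₂.2 ⟨x, hxs, by simpa [dist_comm] using hxr⟩⟩
  have : ∀ᶠ t in residual G, ∀ k : ℕ, ∃ x ∈ s, dist (x⁻¹ * t) t < 1 / ((k : ℝ) + 1) :=
    eventually_countable_forall.2 fun k =>
      mem_of_superset (residual_of_dense_open (hopen _) (hdense _ Nat.one_div_pos_of_nat))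
        fun t ht => by simpa using ht
  obtain ⟨t, ht⟩ := (dense_of_mem_residual this).nonempty
  choose x hxs hxt using ht
  have hx : Tendsto (fun k => (x k)⁻¹) atTop (𝓝 1) := by
    simpa [comp_def] using
      ((continuous_mul_const t⁻¹).tendsto t).comp (Tendsto.of_forall_dist_lt_one_div hxt)
  exact mem_closure_of_tendsto hx (Eventually.of_forall fun k => inv_mem_inv.2 (hxs k))

/-- A semitopological group which is a metrisable Baire space is a topological group. -/
theorem topologicalGroup_of_metrizable_baire {G : Type*} [Group G] [TopologicalSpace G]
    [TopologicalSpace.MetrizableSpace G] [BaireSpace G]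
    (hmul_left : ∀ g : G, Continuous fun h : G => g * h)
    (hmul_right : ∀ g : G, Continuous fun h : G => h * g) :
    IsTopologicalGroup G := by
  let := TopologicalSpace.pseudoMetrizableSpacePseudoMetric G
  have : SeparatelyContinuousMul G := ⟨hmul_left _, hmul_right _⟩
  obtain ⟨z, hz⟩ := (dense_of_mem_residual <| eventually_residual_continuousAt_uncurry
    (f := (· * ·)) (y₀ := 1) hmul_right fun x => (hmul_left x).continuousAt).nonempty
  have hinv : ContinuousAt (fun x : G => x⁻¹) 1 :=
    continuousAt_inv_of_forall_mem_closure_inv fun _ hs => by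
      simpa using one_mem_closure_inv_of_one_mem_closure hs
  exact IsTopologicalGroup.of_nhds_one' (tendsto_mul_nhds_one_of_continuousAt hz)
    (by simpa using hinv.tendsto)
    (fun x => by simpa using ((Homeomorph.mulLeft x).map_nhds_eq 1).symm)
    fun x => by simpa using ((Homeomorph.mulRight x).map_nhds_eq 1).symm
end

section
/- Let X be a Baire space, let (Z, τ') be a topological space, let ρ be a metric on Z which fragments (Z, τ'), and let f : X → Z be quasi-continuous (with respect to τ'). Then there exists a dense Gδ subset C of X such that f, viewed as a map from X into Z with the metric ρ, is continuous at each point of C. In particular, if the topology generated by ρ contains τ', then f : X → (Z, τ') is continuous at every point of C. -/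
open Filter Set Topology

/-- `ρ` is a metric on `Z`. -/
def IsMetricOn {Z : Type*} (ρ : Z → Z → ℝ) : Prop :=
  (∀ x y, ρ x y = 0 ↔ x = y) ∧ (∀ x y, ρ x y = ρ y x) ∧
    ∀ x y z, ρ x z ≤ ρ x y + ρ y z

/-- The topological space `Z` is fragmented by `ρ`: every nonempty subset has a nonempty
relatively open subset of `ρ`-diameter less than any given `ε > 0`. -/
def Fragments {Z : Type*} [TopologicalSpace Z] (ρ : Z → Z → ℝ) : Prop :=
  ∀ ε : ℝ, 0 < ε → ∀ A : Set Z, A.Nonempty →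
    ∃ B : Set Z, B.Nonempty ∧ (∃ U : Set Z, IsOpen U ∧ B = A ∩ U) ∧
      ∀ z ∈ B, ∀ w ∈ B, ρ z w < ε

/-- If `X` is Baire, `ρ` is a metric fragmenting `Z`, and `f : X → Z` is
quasi-continuous, then there is a dense Gδ set `C ⊆ X` at whose points `f` is continuous
as a map into `(Z, ρ)`; if moreover the topology generated by `ρ` contains the topology
of `Z`, then `f` is continuous (into `Z`) at every point of `C`. -/
theorem quasiContinuous_fragmented_continuity {X Z : Type*} [TopologicalSpace X]
    [TopologicalSpace Z] [BaireSpace X]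
    (ρ : Z → Z → ℝ) (hρ : IsMetricOn ρ) (hfrag : Fragments ρ)
    (f : X → Z) (hf : ∀ x : X, QuasiContinuousAt f x) :
    ∃ C : Set X, Dense C ∧ IsGδ C ∧
      (∀ x ∈ C, ∀ ε : ℝ, 0 < ε → ∃ U ∈ 𝓝 x, ∀ x' ∈ U, ρ (f x') (f x) < ε) ∧
      ((∀ V : Set Z, IsOpen V → ∀ z ∈ V, ∃ ε : ℝ, 0 < ε ∧ {w : Z | ρ z w < ε} ⊆ V) →
        ∀ x ∈ C, ContinuousAt f x) := by

  classical
  set W : ℕ → Set X := fun n =>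
    ⋃₀ {U : Set X | IsOpen U ∧ ∀ a ∈ U, ∀ b ∈ U, ρ (f a) (f b) < 1 / (n + 1)} with hW
  have hWopen : ∀ n, IsOpen (W n) := fun n =>
    isOpen_sUnion (fun U hU => hU.1)
  have hWdense : ∀ n, Dense (W n) := by
    intro n
    rw [dense_iff_inter_open]
    intro G hG hGne
    have hpos : (0:ℝ) < 1 / (n + 1) := by positivity
    obtain ⟨B, ⟨z₀, hz₀⟩, ⟨V, hVopen, hBeq⟩, hBdiam⟩ :=
      hfrag (1 / (n + 1)) hpos (f '' G) (hGne.image f)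
    rw [hBeq] at hz₀
    obtain ⟨⟨x, hxG, hfx⟩, hz₀V⟩ := hz₀
    obtain ⟨O, hOopen, hOne, hOG, hOV⟩ := hf x G hG hxG V hVopen (hfx ▸ hz₀V)
    obtain ⟨y, hy⟩ := hOne
    refine ⟨y, mem_inter (hOG hy) ⟨O, ⟨hOopen, ?_⟩, hy⟩⟩
    intro a ha b hb
    have hfa : f a ∈ B := hBeq ▸ ⟨⟨a, hOG ha, rfl⟩, hOV ⟨a, ha, rfl⟩⟩
    have hfb : f b ∈ B := hBeq ▸ ⟨⟨b, hOG hb, rfl⟩, hOV ⟨b, hb, rfl⟩⟩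
    exact hBdiam _ hfa _ hfb
  refine ⟨⋂ n, W n, dense_iInter_of_isOpen hWopen hWdense,
    .iInter (fun n => (hWopen n).isGδ), ?_, ?_⟩
  · intro x hx ε hε
    obtain ⟨n, hn⟩ := exists_nat_one_div_lt hε
    have hxn : x ∈ W n := mem_iInter.mp hx n
    obtain ⟨U, ⟨hUopen, hUdiam⟩, hxU⟩ := hxn
    refine ⟨U, hUopen.mem_nhds hxU, fun x' hx' => ?_⟩
    exact lt_trans (hUdiam x' hx' x hxU) hn
  · intro hball x hx
    have key : ∀ ε : ℝ, 0 < ε → ∃ U ∈ 𝓝 x, ∀ x' ∈ U, ρ (f x') (f x) < ε := by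
      intro ε hε
      obtain ⟨n, hn⟩ := exists_nat_one_div_lt hε
      have hxn : x ∈ W n := mem_iInter.mp hx n
      obtain ⟨U, ⟨hUopen, hUdiam⟩, hxU⟩ := hxn
      exact ⟨U, hUopen.mem_nhds hxU, fun x' hx' => lt_trans (hUdiam x' hx' x hxU) hn⟩
    intro V hV
    rw [mem_nhds_iff] at hV
    obtain ⟨V', hV'sub, hV'open, hfxV'⟩ := hV
    obtain ⟨ε, hε, hballsub⟩ := hball V' hV'open (f x) hfxV'
    obtain ⟨U, hU, hUprop⟩ := key ε hε
    rw [mem_map]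
    filter_upwards [hU] with x' hx'
    apply hV'sub
    apply hballsub
    have := hUprop x' hx'
    rw [hρ.2.1] at this
    exact this
end

section
/- Let X, Y and Z be topological spaces and let f : X × Y → Z be a separately continuous function. Suppose: (i) X is a Baire space; (ii) Y is a W̃-space which possesses a rich family 𝔉 all of whose members are Baire spaces; and (iii) Z is a regular space that is fragmented by some metric ρ whose topology contains the topology of Z. Then f is continuous at the points of a dense Gδ subset of X × Y. -/
open Filter Set Topology

/-!
The product `X × Y` is a Baire space. Given dense open sets `E n` and a box `u ×ˢ v`, player β of
a single Banach–Mazur play in `X` answers each move `A` by the `X`-side of a box inside `E n` and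
inside `A ×ˢ σ q h`, where `σ q` is the W̃-strategy at `q`; the rounds run through all tasks
`(n, q, h)` with `q` and the history `h` taken from a countable set `Q` that grows along the play,
so that `closure Q` is a member of the rich family. Oxtoby's theorem gives a point `x` of the play,
and since each `σ q` wins, the sections `{y | (x, y) ∈ E n}` are dense in the Baire space
`closure Q`, hence meet in `v`.

A similar play, in which player II pushes `f (·, y)` out of a closed neighbourhood of
`f (x₀, y₀)` whenever `σ` allows it, shows that `f` is quasicontinuous. By fragmentability every
open box then contains an open box on which `f` has `ρ`-oscillation `< 1 / (n + 1)`; these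
oscillation sets are dense and open, and `f` is continuous on their intersection because the
`ρ`-balls are neighbourhoods.
-/

theorem exists_le_ofNat_unpair_eq {T : Type*} [Denumerable T] (τ : T) (K : ℕ) :
    ∃ m, K ≤ m ∧ Denumerable.ofNat T (Nat.unpair m).2 = τ :=
  ⟨Nat.pair K (Encodable.encode τ), Nat.left_le_pair _ _, by
    rw [Nat.unpair_pair, Denumerable.ofNat_encode]⟩

theorem apply_eq_of_succ_eq_update {α : Type*} {g : ℕ → ℕ → α}
    (hg : ∀ m, ∃ a, g (m + 1) = Function.update (g m) (m + 1) a) {m j : ℕ} (hj : j ≤ m) :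
    g m j = g j j := by
  induction m with
  | zero => rw [Nat.le_zero.1 hj]
  | succ m ih =>
    rcases hj.eq_or_lt with rfl | hj
    · rfl
    obtain ⟨a, ha⟩ := hg m
    rw [ha, Function.update_of_ne hj.ne, ih (Nat.lt_succ_iff.1 hj)]

theorem eq_ofFn_of_succ_eq_append {α : Type*} {L : ℕ → List α} {p : ℕ → α} (h0 : L 0 = [])
    (hs : ∀ n, L (n + 1) = L n ++ [p n]) (n : ℕ) : L n = List.ofFn fun i : Fin n => p i := by
  induction n with
  | zero => simp [h0]
  | succ n ih => rw [hs, ih, List.ofFn_succ', List.concat_eq_append]; rfl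

theorem exists_seq_of_forall_list {α : Type*} {P : List α → α → Prop} (h : ∀ l, ∃ a, P l a) :
    ∃ p : ℕ → α, ∀ n, P (List.ofFn fun i : Fin n => p i) (p n) := by
  choose step hstep using h
  let L : ℕ → List α := fun n => Nat.rec [] (fun _ l => l ++ [step l]) n
  refine ⟨fun n => step (L n), fun n => ?_⟩
  rw [← eq_ofFn_of_succ_eq_append (L := L) rfl (fun _ => rfl) n]
  exact hstep (L n)

section BanachMazur

variable {X S : Type*}

theorem exists_pairwiseDisjoint_inter_nonempty [TopologicalSpace X] (V : Set X)
    (g : Set X → Set X) (hg : ∀ A, IsOpen A → A.Nonempty → A ⊆ V → (g A).Nonempty ∧ g A ⊆ A) :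
    ∃ M : Set (Set X), (∀ A ∈ M, IsOpen A ∧ A.Nonempty ∧ A ⊆ V) ∧ M.PairwiseDisjoint g ∧
      ∀ O, IsOpen O → O.Nonempty → O ⊆ V → ∃ A ∈ M, (O ∩ g A).Nonempty := by
  obtain ⟨M, ⟨hMsub, hMdisj⟩, hmax⟩ := zorn_subset
    {M : Set (Set X) | (∀ A ∈ M, IsOpen A ∧ A.Nonempty ∧ A ⊆ V) ∧ M.PairwiseDisjoint g}
    fun c hc hchain => ⟨⋃₀ c, ⟨fun A ⟨N, hN, hAN⟩ => (hc hN).1 A hAN,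
      (pairwiseDisjoint_sUnion hchain.directedOn).2 fun N hN => (hc hN).2⟩,
      fun _ => subset_sUnion_of_mem⟩
  refine ⟨M, hMsub, hMdisj, fun O hO hne hOV => ?_⟩
  obtain ⟨hgO, hgOO⟩ := hg O hO hne hOV
  by_cases hOM : O ∈ M
  · exact ⟨O, hOM, by rwa [inter_eq_right.2 hgOO]⟩
  -- `insert O M` would be a larger disjoint family, so `g O` meets some `g A`.
  have hnot : ¬ (insert O M).PairwiseDisjoint g := fun h =>
    hOM (hmax ⟨forall_mem_insert.2 ⟨⟨hO, hne, hOV⟩, hMsub⟩, h⟩ (subset_insert O M)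
      (mem_insert O M))
  rw [pairwiseDisjoint_insert] at hnot
  push Not at hnot
  obtain ⟨A, hAM, -, hOA⟩ := hnot hMdisj
  obtain ⟨x, hxO, hxA⟩ := not_disjoint_iff.1 hOA
  exact ⟨A, hAM, x, hgOO hxO, hxA⟩

theorem BaireSpace.inter_iInter_nonempty [TopologicalSpace X] [BaireSpace X] {U : Set X}
    {W : ℕ → Set X} (hU : IsOpen U) (hne : U.Nonempty) (hW : ∀ k, IsOpen (W k))
    (hd : ∀ k O, IsOpen O → (O ∩ U).Nonempty → (O ∩ W k).Nonempty) :
    (U ∩ ⋂ k, W k).Nonempty := by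
  have hdense : ∀ k, Dense (W k ∪ (closure U)ᶜ) := fun k => dense_iff_inter_open.2
    fun O hO ⟨x, hxO⟩ => by
      by_cases h : (O ∩ U).Nonempty
      · obtain ⟨y, hyO, hy⟩ := hd k O hO h
        exact ⟨y, hyO, Or.inl hy⟩
      · exact ⟨x, hxO, Or.inr fun hxU => h (mem_closure_iff.1 hxU O hO hxO)⟩
  obtain ⟨x, hxU, hx⟩ := (dense_iInter_of_isOpen
    (fun k => (hW k).union isClosed_closure.isOpen_compl) hdense).inter_open_nonempty U hU hne
  exact ⟨x, hxU, mem_iInter.2 fun k =>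
    (mem_iInter.1 hx k).resolve_right (not_not.2 (subset_closure hxU))⟩

section Reachable

variable (B : S → Set X) (next : ℕ → S → Set X → S) (M : ℕ → S → Set (Set X)) (s₀ : S)

/-- The positions reached after `k` rounds when the moves of player α at a position `s` of round
`m` are restricted to the family `M m s`. -/
def reachable : ℕ → Set S
  | 0 => {s₀}
  | k + 1 => ⋃ s ∈ reachable k, next k s '' M k s

variable {B next M s₀}

theorem exists_of_mem_reachable_succ (hsub : ∀ m s, ∀ A ∈ M m s, B (next m s A) ⊆ B s)
    {k : ℕ} {s' : S} (hs' : s' ∈ reachable next M s₀ (k + 1)) :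
    ∃ s ∈ reachable next M s₀ k, ∃ A ∈ M k s, s' = next k s A ∧ B s' ⊆ B s := by
  simp only [reachable, mem_iUnion, mem_image] at hs'
  obtain ⟨s, hs, A, hA, rfl⟩ := hs'
  exact ⟨s, hs, A, hA, rfl, hsub k s A hA⟩

theorem pairwiseDisjoint_reachable (hsub : ∀ m s, ∀ A ∈ M m s, B (next m s A) ⊆ B s)
    (hdisj : ∀ m s, (M m s).PairwiseDisjoint (B ∘ next m s)) (k : ℕ) :
    (reachable next M s₀ k).PairwiseDisjoint B := by
  induction k with
  | zero => exact pairwiseDisjoint_singleton s₀ B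
  | succ k ih =>
    intro s₁ h₁ s₂ h₂ hne
    obtain ⟨t₁, ht₁, A₁, hA₁, rfl, hsub₁⟩ := exists_of_mem_reachable_succ hsub h₁
    obtain ⟨t₂, ht₂, A₂, hA₂, rfl, hsub₂⟩ := exists_of_mem_reachable_succ hsub h₂
    by_cases ht : t₁ = t₂
    · subst ht
      exact hdisj k t₁ hA₁ hA₂ fun h => hne (h ▸ rfl)
    · exact (ih ht₁ ht₂ ht).mono hsub₁ hsub₂

theorem inter_biUnion_reachable_nonempty [TopologicalSpace X]
    (hmeet : ∀ m s, ∀ O, IsOpen O → O.Nonempty → O ⊆ B s →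
      ∃ A ∈ M m s, (O ∩ B (next m s A)).Nonempty)
    (hopen : ∀ k, ∀ s ∈ reachable next M s₀ k, IsOpen (B s))
    (k : ℕ) {O : Set X} (hO : IsOpen O) (hne : (O ∩ B s₀).Nonempty) :
    (O ∩ ⋃ s ∈ reachable next M s₀ k, B s).Nonempty := by
  induction k with
  | zero => simpa [reachable] using hne
  | succ k ih =>
    obtain ⟨x, hxO, hx⟩ := ih
    obtain ⟨s, hs, hxs⟩ := mem_iUnion₂.1 hx
    obtain ⟨A, hA, y, ⟨hyO, -⟩, hyA⟩ := hmeet k s (O ∩ B s)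
      (hO.inter (hopen k s hs)) ⟨x, hxO, hxs⟩ inter_subset_right
    exact ⟨y, hyO, mem_iUnion₂.2 ⟨next k s A,
      mem_iUnion₂.2 ⟨s, hs, mem_image_of_mem _ hA⟩, hyA⟩⟩

end Reachable

/-- Oxtoby's theorem: in a Baire space no strategy of player β in the Banach–Mazur game forces
an empty intersection. The strategy has states `s`, with current move `B s` and answer
`next m s A` to the move `A` of player α in round `m`. -/
theorem BaireSpace.exists_play [TopologicalSpace X] [BaireSpace X] (B : S → Set X)
    (next : ℕ → S → Set X → S) (s₀ : S) (h₀ : IsOpen (B s₀)) (h₀ne : (B s₀).Nonempty)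
    (hnext : ∀ m s A, IsOpen A → A.Nonempty → A ⊆ B s →
      IsOpen (B (next m s A)) ∧ (B (next m s A)).Nonempty ∧ B (next m s A) ⊆ A) :
    ∃ (A : ℕ → Set X) (s : ℕ → S), s 0 = s₀ ∧
      (∀ m, IsOpen (A m) ∧ (A m).Nonempty ∧ A m ⊆ B (s m) ∧ s (m + 1) = next m (s m) (A m)) ∧
      (⋂ m, B (s m)).Nonempty := by
  choose M hM hdisj hmeet using fun m s => exists_pairwiseDisjoint_inter_nonempty (B s)
    (B ∘ next m s) fun A hA hne hsub => (hnext m s A hA hne hsub).2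
  set R := reachable next M s₀
  have hsub : ∀ m s, ∀ A ∈ M m s, B (next m s A) ⊆ B s := fun m s A hA =>
    let ⟨hAo, hAne, hAs⟩ := hM m s A hA
    (hnext m s A hAo hAne hAs).2.2.trans hAs
  have hopen : ∀ k, ∀ s ∈ R k, IsOpen (B s) ∧ (B s).Nonempty := by
    intro k
    induction k with
    | zero => simpa [R, reachable] using ⟨h₀, h₀ne⟩
    | succ k ih =>
      intro s' hs'
      obtain ⟨s, hs, A, hA, rfl, -⟩ := exists_of_mem_reachable_succ hsub hs'
      obtain ⟨hAo, hAne, hAs⟩ := hM k s A hA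
      exact ⟨(hnext k s A hAo hAne hAs).1, (hnext k s A hAo hAne hAs).2.1⟩
  obtain ⟨x, -, hx⟩ := BaireSpace.inter_iInter_nonempty h₀ h₀ne
    (fun k => isOpen_biUnion fun s hs => (hopen k s hs).1)
    fun k O hO hne => inter_biUnion_reachable_nonempty hmeet (fun k s hs => (hopen k s hs).1)
      k hO hne
  choose σ hσR hxσ using fun k => mem_iUnion₂.1 (mem_iInter.1 hx k)
  -- The sets `B s`, `s ∈ R k`, are disjoint, so `x` singles out one branch of the tree.
  have hbranch : ∀ k, ∃ A ∈ M k (σ k), σ (k + 1) = next k (σ k) A := by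
    intro k
    obtain ⟨s, hs, A, hA, heq, hsub'⟩ := exists_of_mem_reachable_succ hsub (hσR (k + 1))
    obtain rfl : s = σ k := by
      by_contra hne
      exact (pairwiseDisjoint_reachable hsub hdisj k hs (hσR k) hne).ne_of_mem
        (hsub' (hxσ (k + 1))) (hxσ k) rfl
    exact ⟨A, hA, heq⟩
  choose A hAM hA using hbranch
  exact ⟨A, σ, by simpa [R, reachable] using hσR 0,
    fun m => ⟨(hM m _ _ (hAM m)).1, (hM m _ _ (hAM m)).2.1, (hM m _ _ (hAM m)).2.2, hA m⟩,
    x, mem_iInter.2 hxσ⟩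

/-- Player II answers `σ` by points `y` that push the Banach–Mazur play in `X` into `bad y`
whenever some legal answer allows it. -/
theorem BaireSpace.exists_play_into_bad [TopologicalSpace X] [BaireSpace X] {Y : Type*}
    {σ : List Y → Set Y} (hσ : ∀ h, (σ h).Nonempty) {bad : Y → Set X}
    (hbad : ∀ y, IsOpen (bad y)) {U₀ : Set X} (hU₀ : IsOpen U₀) (hne : U₀.Nonempty) :
    ∃ x ∈ U₀, ∃ (A : ℕ → Set X) (p : ℕ → Y), ∀ m,
      p m ∈ σ (List.ofFn fun i : Fin m => p i) ∧ IsOpen (A m) ∧ (A m).Nonempty ∧ A m ⊆ U₀ ∧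
      (x ∈ bad (p m) ∨ ∀ y ∈ σ (List.ofFn fun i : Fin m => p i), A m ∩ bad y = ∅) := by
  have hmove : ∀ (A : Set X) (ys : List Y), ∃ y ∈ σ ys,
      ∀ y' ∈ σ ys, (A ∩ bad y').Nonempty → (A ∩ bad y).Nonempty := by
    intro A ys
    by_cases h : ∃ y' ∈ σ ys, (A ∩ bad y').Nonempty
    · obtain ⟨y', hy', hne⟩ := h
      exact ⟨y', hy', fun _ _ _ => hne⟩
    · obtain ⟨y, hy⟩ := hσ ys
      exact ⟨y, hy, fun y' hy' hne => absurd ⟨y', hy', hne⟩ h⟩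
  choose ch hchσ hch using hmove
  classical
  let next : ℕ → Set X × List Y → Set X → Set X × List Y := fun _ s A =>
    (if (A ∩ bad (ch A s.2)).Nonempty then A ∩ bad (ch A s.2) else A, s.2 ++ [ch A s.2])
  have hnext_fst : ∀ m s A, (next m s A).1 =
      if (A ∩ bad (ch A s.2)).Nonempty then A ∩ bad (ch A s.2) else A := fun _ _ _ => rfl
  have hnext : ∀ m s A, IsOpen A → A.Nonempty → A ⊆ s.1 →
      IsOpen (next m s A).1 ∧ (next m s A).1.Nonempty ∧ (next m s A).1 ⊆ A := by
    intro m s A hA hne _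
    by_cases h : (A ∩ bad (ch A s.2)).Nonempty
    · rw [hnext_fst m, if_pos h]
      exact ⟨hA.inter (hbad _), h, inter_subset_left⟩
    · rw [hnext_fst m, if_neg h]
      exact ⟨hA, hne, subset_rfl⟩
  obtain ⟨A, s, hs0, hA, x, hx⟩ := BaireSpace.exists_play Prod.fst next (U₀, []) hU₀ hne hnext
  set p : ℕ → Y := fun m => ch (A m) (s m).2
  have hys : ∀ m, (s m).2 = List.ofFn fun i : Fin m => p i :=
    eq_ofFn_of_succ_eq_append (by rw [hs0]) fun m => by rw [(hA m).2.2.2]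
  have hanti : Antitone fun m => (s m).1 := antitone_nat_of_succ_le fun m => by
    obtain ⟨hAo, hAne, hAs, hsucc⟩ := hA m
    exact (hsucc ▸ (hnext m (s m) (A m) hAo hAne hAs).2.2).trans hAs
  have hs0' : (s 0).1 = U₀ := by rw [hs0]
  refine ⟨x, hs0' ▸ mem_iInter.1 hx 0, A, p, fun m => ?_⟩
  obtain ⟨hAo, hAne, hAs, hsucc⟩ := hA m
  refine ⟨hys m ▸ hchσ _ _, hAo, hAne, hAs.trans (hs0' ▸ hanti (Nat.zero_le m)), ?_⟩
  by_cases h : (A m ∩ bad (p m)).Nonempty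
  · have hxm : x ∈ (s (m + 1)).1 := mem_iInter.1 hx (m + 1)
    rw [hsucc, hnext_fst m, if_pos h] at hxm
    exact Or.inl hxm.2
  · exact Or.inr fun y hy =>
      not_nonempty_iff_eq_empty.1 fun hy' => h (hch _ _ y (hys m ▸ hy) hy')

end BanachMazur
section WinningStrategy

variable {Y : Type*} [TopologicalSpace Y]

/-- Winning strategies of player I in `G̃(y)`: `IsWtildePoint y` unfolds to
`∃ σ, IsWinningStrategy σ y`. -/
def IsWinningStrategy (σ : List Y → Set Y) (y : Y) : Prop :=
  (∀ h, IsOpen (σ h) ∧ (σ h).Nonempty) ∧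
    ∀ p : ℕ → Y, (∀ n, p n ∈ σ (List.ofFn fun i : Fin n => p i)) → MapClusterPt y atTop p

/-- Otherwise player II could answer every `Q`-history by a point of `Q ∖ O`, and the resulting
play would avoid the neighbourhood `O` of `y`. -/
theorem IsWinningStrategy.exists_history {σ : List Y → Set Y} {y : Y}
    (hσ : IsWinningStrategy σ y) (Q : Set Y) {O : Set Y} (hO : O ∈ 𝓝 y) :
    ∃ h : List Y, (∀ z ∈ h, z ∈ Q) ∧
      ∀ R, IsOpen R → R ⊆ σ h → (R ∩ Q).Nonempty → (R ∩ O ∩ Q).Nonempty := by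
  by_contra! hbad
  have hmove : ∀ h : List Y, ∃ z, z ∈ σ h ∧ ((∀ w ∈ h, w ∈ Q) → z ∈ Q ∧ z ∉ O) := by
    intro h
    by_cases hh : ∀ w ∈ h, w ∈ Q
    · obtain ⟨R, -, hRσ, ⟨z, hzR, hzQ⟩, hRO⟩ := hbad h hh
      exact ⟨z, hRσ hzR, fun _ => ⟨hzQ, fun hzO => hRO.subset ⟨⟨hzR, hzO⟩, hzQ⟩⟩⟩
    · obtain ⟨z, hz⟩ := (hσ.1 h).2
      exact ⟨z, hz, fun h' => absurd h' hh⟩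
  obtain ⟨p, hp⟩ := exists_seq_of_forall_list hmove
  have hpQ : ∀ n, p n ∈ Q ∧ p n ∉ O := by
    intro n
    induction n using Nat.strong_induction_on with
    | _ n ih => exact (hp n).2 (List.forall_mem_ofFn_iff.2 fun i => (ih i i.2).1)
  obtain ⟨n, hn⟩ := (mapClusterPt_iff_frequently.1 (hσ.2 p fun n => (hp n).1) O hO).exists
  exact (hpQ n).2 hn

theorem exists_mem_iInter_of_isWinningStrategy {σ : Y → List Y → Set Y}
    (hσ : ∀ y, IsWinningStrategy (σ y) y) {Q : Set Y} [BaireSpace (closure Q)] {T : ℕ → Set Y}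
    (hT : ∀ n, IsOpen (T n))
    (htask : ∀ n q h, q ∈ Q → (∀ z ∈ h, z ∈ Q) →
      ∃ V, IsOpen V ∧ V ⊆ σ q h ∧ (V ∩ Q).Nonempty ∧ V ⊆ T n)
    {v : Set Y} (hv : IsOpen v) (hvQ : (v ∩ Q).Nonempty) : ∃ y ∈ v, ∀ n, y ∈ T n := by
  have hdense : ∀ n, Dense ((↑) ⁻¹' T n : Set (closure Q)) := fun n =>
    dense_iff_inter_open.2 fun U hU ⟨⟨y, hyQ⟩, hyU⟩ => by
      obtain ⟨O, hO, rfl⟩ := isOpen_induced_iff.1 hU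
      obtain ⟨q, hqO, hq⟩ := mem_closure_iff.1 hyQ O hO hyU
      obtain ⟨h, hhQ, habs⟩ := (hσ q).exists_history Q (hO.mem_nhds hqO)
      obtain ⟨V, hV, hVσ, hVQ, hVT⟩ := htask n q h hq hhQ
      obtain ⟨z, ⟨hzV, hzO⟩, hzQ⟩ := habs V hV hVσ hVQ
      exact ⟨⟨z, subset_closure hzQ⟩, hzO, hVT hzV⟩
  obtain ⟨y, hyv, hyT⟩ := (dense_iInter_of_isOpen
    (fun n => (hT n).preimage continuous_subtype_val) hdense).inter_open_nonempty _
    (hv.preimage continuous_subtype_val)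
    (hvQ.elim fun y hy => ⟨⟨y, subset_closure hy.2⟩, hy.1⟩)
  exact ⟨y, hyv, fun n => mem_iInter.1 hyT n⟩

end WinningStrategy

section RichFamily

variable {Y : Type*} [TopologicalSpace Y]

theorem SeparableSubspace.of_countable_s17 {c : Set Y} (hc : c.Countable) : SeparableSubspace c :=
  ⟨c, subset_rfl, hc, subset_closure⟩

theorem IsRichFamily.exists_dense_seq {𝓕 : Set (Set Y)} (h𝓕 : IsRichFamily 𝓕) {F : Set Y}
    (hF : F ∈ 𝓕) : ∃ e : ℕ → Y, range e ⊆ F ∧ F ⊆ closure (range e) := by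
  obtain ⟨⟨y, hy⟩, -, c, hcF, hc, hFc⟩ := h𝓕.1 F hF
  obtain ⟨e, rfl⟩ := hc.exists_eq_range (closure_nonempty_iff.1 ⟨y, hFc hy⟩)
  exact ⟨e, hcF, hFc⟩

theorem IsRichFamily.closure_range_mem {𝓕 : Set (Set Y)} (h𝓕 : IsRichFamily 𝓕)
    {seq : Set Y → ℕ → Y} (hseq : ∀ F ∈ 𝓕, range (seq F) ⊆ F ∧ F ⊆ closure (range (seq F)))
    {F : ℕ → Set Y} (hF : ∀ j, F j ∈ 𝓕) (hsucc : ∀ m, range (seq (F m)) ⊆ F (m + 1)) :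
    closure (range fun i : ℕ × ℕ => seq (F i.1) i.2) ∈ 𝓕 := by
  have hmono : Monotone F := monotone_nat_of_le_succ fun m =>
    (hseq _ (hF m)).2.trans (closure_minimal (hsucc m) (h𝓕.1 _ (hF _)).2.1)
  convert h𝓕.2.2 F hF hmono using 1
  refine subset_antisymm (closure_mono ?_) (closure_minimal ?_ isClosed_closure)
  · rintro _ ⟨i, rfl⟩
    exact mem_iUnion.2 ⟨i.1, (hseq _ (hF _)).1 ⟨i.2, rfl⟩⟩
  · exact iUnion_subset fun j => (hseq _ (hF j)).2.trans
      (closure_mono (range_subset_iff.2 fun k => ⟨(j, k), rfl⟩))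

end RichFamily

section Product

variable {X Y : Type*} [TopologicalSpace X] [TopologicalSpace Y]

theorem BaireSpace.exists_play_prod [BaireSpace X] [Nonempty Y] {σ : Y → List Y → Set Y}
    (hσ : ∀ q h, IsOpen (σ q h) ∧ (σ q h).Nonempty) {E : ℕ → Set (X × Y)}
    (hE : ∀ n (A : Set X) (P : Set Y), IsOpen A → A.Nonempty → IsOpen P → P.Nonempty →
      ∃ U V, IsOpen U ∧ U.Nonempty ∧ U ⊆ A ∧ IsOpen V ∧ V.Nonempty ∧ V ⊆ P ∧ U ×ˢ V ⊆ E n)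
    {u : Set X} (hu : IsOpen u) (hune : u.Nonempty)
    (seq : Set Y → ℕ → Y) (grow : Y → Set Y → Set Y) (F₀ : Set Y) :
    ∃ x ∈ u, ∃ (F : ℕ → Set Y) (pt : ℕ → Y), F 0 = F₀ ∧ (∀ m, F (m + 1) = grow (pt m) (F m)) ∧
      ∀ n (i : ℕ × ℕ) (js : List (ℕ × ℕ)), ∃ m V, IsOpen V ∧ pt m ∈ V ∧
        V ⊆ σ (seq (F i.1) i.2) (js.map fun k => seq (F k.1) k.2) ∧ ∀ y ∈ V, (x, y) ∈ E n := by
  choose! boxX boxY hbox using hE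
  -- A state is the sequence `Fs` built so far (meaningful up to the current round) and the move
  -- of player β. Round `m` serves the task `(n, i, js)` coded by `m.unpair.2`: a box in `E n`
  -- below `σ` at the point with index `i` after the history with indices `js`, where index
  -- `(j, k)` stands for `seq (Fs j) k`; every task comes up at arbitrarily late rounds.
  let task : ℕ → ℕ × (ℕ × ℕ) × List (ℕ × ℕ) := fun m => Denumerable.ofNat _ (Nat.unpair m).2
  let P : ℕ → (ℕ → Set Y) → Set Y := fun m Fs =>
    σ (seq (Fs (task m).2.1.1) (task m).2.1.2) ((task m).2.2.map fun k => seq (Fs k.1) k.2)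
  let next : ℕ → (ℕ → Set Y) × Set X → Set X → (ℕ → Set Y) × Set X := fun m st A =>
    (Function.update st.1 (m + 1)
      (grow (Classical.epsilon (· ∈ boxY (task m).1 A (P m st.1))) (st.1 m)),
      boxX (task m).1 A (P m st.1))
  obtain ⟨A, s, hs0, hA, x, hx⟩ := BaireSpace.exists_play Prod.snd next (fun _ => F₀, u) hu
    hune fun m st A hA hne _ =>
      let h := hbox (task m).1 A (P m st.1) hA hne (hσ _ _).1 (hσ _ _).2
      ⟨h.1, h.2.1, h.2.2.1⟩
  have hstable : ∀ {m j}, j ≤ m → (s m).1 j = (s j).1 j := fun hj =>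
    apply_eq_of_succ_eq_update (g := fun m => (s m).1) (fun m => ⟨_, by rw [(hA m).2.2.2]⟩) hj
  refine ⟨x, by simpa [hs0] using mem_iInter.1 hx 0, fun j => (s j).1 j,
    fun m => Classical.epsilon (· ∈ boxY (task m).1 (A m) (P m (s m).1)), by simp [hs0],
    fun m => by simp only [(hA m).2.2.2, next, Function.update_self], fun n i js => ?_⟩
  obtain ⟨K, hK⟩ := ((i :: js).map Prod.fst).finite_toSet.bddAbove
  obtain ⟨m, hKm, htask⟩ := exists_le_ofNat_unpair_eq (n, i, js) K
  have htask' : task m = (n, i, js) := htask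
  have hP : P m (s m).1 = σ (seq ((s i.1).1 i.1) i.2)
      (js.map fun k => seq ((s k.1).1 k.1) k.2) := by
    simp only [P, htask']
    rw [hstable (le_trans (hK (List.mem_map_of_mem List.mem_cons_self)) hKm)]
    congr 1
    refine List.map_congr_left fun k hk => ?_
    rw [hstable (le_trans (hK (List.mem_map_of_mem (List.mem_cons_of_mem _ hk))) hKm)]
  obtain ⟨-, -, -, hVo, hVne, hVP, hUV⟩ :=
    hbox (task m).1 (A m) (P m (s m).1) (hA m).1 (hA m).2.1 (hσ _ _).1 (hσ _ _).2
  have hxU : x ∈ boxX (task m).1 (A m) (P m (s m).1) := by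
    simpa [(hA m).2.2.2, next] using mem_iInter.1 hx (m + 1)
  exact ⟨m, boxY (task m).1 (A m) (P m (s m).1), hVo, Classical.epsilon_spec hVne, hP ▸ hVP,
    fun y hy => by simpa only [htask'] using hUV ⟨hxU, hy⟩⟩

theorem exists_isOpen_prod_subset_of_dense {E : Set (X × Y)} (hE : IsOpen E) (hd : Dense E)
    {A : Set X} {P : Set Y} (hA : IsOpen A) (hAne : A.Nonempty) (hP : IsOpen P)
    (hPne : P.Nonempty) :
    ∃ U V, IsOpen U ∧ U.Nonempty ∧ U ⊆ A ∧ IsOpen V ∧ V.Nonempty ∧ V ⊆ P ∧ U ×ˢ V ⊆ E := by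
  obtain ⟨⟨a, b⟩, hab, habE⟩ := hd.inter_open_nonempty _ (hA.prod hP) (hAne.prod hPne)
  obtain ⟨U, V, hU, hV, ha, hb, hUV⟩ :=
    isOpen_prod_iff.1 (hE.inter (hA.prod hP)) a b ⟨habE, hab⟩
  exact ⟨U, V, hU, ⟨a, ha⟩, fun x hx => (hUV (mk_mem_prod hx hb)).2.1, hV, ⟨b, hb⟩,
    fun y hy => (hUV (mk_mem_prod ha hy)).2.2, fun p hp => (hUV hp).1⟩

theorem IsRichFamily.baireSpace_prod [BaireSpace X] (hY : ∀ y : Y, IsWtildePoint y)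
    {𝓕 : Set (Set Y)} (h𝓕 : IsRichFamily 𝓕) (hBaire : ∀ F ∈ 𝓕, BaireSpace F) :
    BaireSpace (X × Y) := by
  choose σ hσ using hY
  replace hσ : ∀ y, IsWinningStrategy (σ y) y := hσ
  refine ⟨fun E hEo hEd => dense_iff_inter_open.2 fun G hG ⟨⟨x₁, y₁⟩, hp⟩ => ?_⟩
  obtain ⟨u, v, hu, hv, hx₁, hy₁, huv⟩ := isOpen_prod_iff.1 hG x₁ y₁ hp
  have : Nonempty Y := ⟨y₁⟩
  choose! seq hseq using fun F => h𝓕.exists_dense_seq (F := F)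
  choose! grow hgrow using fun c (hc : c.Countable) => h𝓕.2.1 c (.of_countable hc)
  obtain ⟨x, hxu, F, pt, hF0, hFs, htask⟩ := BaireSpace.exists_play_prod
    (fun q h => (hσ q).1 h) (fun n _ _ => exists_isOpen_prod_subset_of_dense (hEo n) (hEd n))
    hu ⟨x₁, hx₁⟩ seq (fun y F => grow (insert y (range (seq F)))) (grow {y₁})
  have hF : ∀ j, F j ∈ 𝓕
    | 0 => hF0 ▸ (hgrow _ (countable_singleton _)).1
    | m + 1 => hFs m ▸ (hgrow _ ((countable_range _).insert _)).1
  have hsucc : ∀ m, insert (pt m) (range (seq (F m))) ⊆ F (m + 1) := fun m =>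
    hFs m ▸ (hgrow _ ((countable_range _).insert _)).2
  set Q := range fun i : ℕ × ℕ => seq (F i.1) i.2
  have hFQ : ∀ j, F j ⊆ closure Q := fun j =>
    (hseq _ (hF j)).2.trans (closure_mono (range_subset_iff.2 fun k => ⟨(j, k), rfl⟩))
  have := hBaire _ (h𝓕.closure_range_mem hseq hF fun m => (subset_insert _ _).trans (hsucc m))
  have htask' : ∀ n q h, q ∈ Q → (∀ z ∈ h, z ∈ Q) →
      ∃ V, IsOpen V ∧ V ⊆ σ q h ∧ (V ∩ Q).Nonempty ∧ V ⊆ Prod.mk x ⁻¹' E n := by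
    rintro n _ h ⟨i, rfl⟩ hh
    obtain ⟨js, rfl⟩ : h ∈ range (List.map fun i : ℕ × ℕ => seq (F i.1) i.2) := by
      rwa [Set.range_list_map]
    obtain ⟨m, V, hV, hptV, hVσ, hVE⟩ := htask n i js
    exact ⟨V, hV, hVσ, mem_closure_iff.1 (hFQ _ (hsucc m (mem_insert _ _))) V hV hptV, hVE⟩
  obtain ⟨y, hyv, hyE⟩ := exists_mem_iInter_of_isWinningStrategy hσ
    (fun n => (hEo n).preimage (Continuous.prodMk_right x)) htask' hv
    (mem_closure_iff.1 (hFQ 0 (hF0 ▸ (hgrow _ (countable_singleton _)).2 rfl)) v hv hy₁)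
  exact ⟨(x, y), huv ⟨hxu, hyv⟩, mem_iInter.2 hyE⟩

end Product

section Oscillation

variable {α Z : Type*} [TopologicalSpace α]

def oscillationLT (ρ : Z → Z → ℝ) (f : α → Z) (ε : ℝ) : Set α :=
  {a | ∃ O, IsOpen O ∧ a ∈ O ∧ ∀ b ∈ O, ∀ c ∈ O, ρ (f b) (f c) < ε}

theorem isOpen_oscillationLT (ρ : Z → Z → ℝ) (f : α → Z) (ε : ℝ) :
    IsOpen (oscillationLT ρ f ε) :=
  isOpen_iff_forall_mem_open.2 fun _ ⟨O, hO, haO, hosc⟩ =>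
    ⟨O, fun _ hb => ⟨O, hO, hb, hosc⟩, hO, haO⟩

theorem subset_oscillationLT {ρ : Z → Z → ℝ} {f : α → Z} {ε : ℝ} {O : Set α} (hO : IsOpen O)
    (hosc : ∀ b ∈ O, ∀ c ∈ O, ρ (f b) (f c) < ε) : O ⊆ oscillationLT ρ f ε :=
  fun _ ha => ⟨O, hO, ha, hosc⟩

theorem continuousAt_of_forall_mem_oscillationLT [TopologicalSpace Z] {ρ : Z → Z → ℝ}
    (hρ : ∀ V : Set Z, IsOpen V → ∀ z ∈ V, ∃ ε : ℝ, 0 < ε ∧ {w : Z | ρ z w < ε} ⊆ V)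
    {f : α → Z} {a : α} (ha : ∀ n : ℕ, a ∈ oscillationLT ρ f (1 / (n + 1))) :
    ContinuousAt f a := by
  intro W hW
  obtain ⟨V, hVW, hV, hfa⟩ := mem_nhds_iff.1 hW
  obtain ⟨ε, hε, hball⟩ := hρ V hV (f a) hfa
  obtain ⟨n, hn⟩ := exists_nat_one_div_lt hε
  obtain ⟨O, hO, haO, hosc⟩ := ha n
  show f ⁻¹' W ∈ 𝓝 a
  exact Filter.mem_of_superset (hO.mem_nhds haO) fun b hb =>
    hVW (hball ((hosc a haO b hb).trans hn))

end Oscillation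

section SeparatelyContinuous

variable {X Y Z : Type*} [TopologicalSpace X] [TopologicalSpace Y] [TopologicalSpace Z]

theorem exists_isOpen_prod_subset_preimage [BaireSpace X] [RegularSpace Z] {f : X × Y → Z}
    (hf₁ : ∀ x, Continuous fun y => f (x, y)) (hf₂ : ∀ y, Continuous fun x => f (x, y))
    {x₀ : X} {y₀ : Y} (hy₀ : IsWtildePoint y₀) {U : Set X} {V : Set Y} {W : Set Z}
    (hU : U ∈ 𝓝 x₀) (hV : V ∈ 𝓝 y₀) (hW : W ∈ 𝓝 (f (x₀, y₀))) :
    ∃ U' V', IsOpen U' ∧ U'.Nonempty ∧ U' ⊆ U ∧ IsOpen V' ∧ V'.Nonempty ∧ V' ⊆ V ∧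
      U' ×ˢ V' ⊆ f ⁻¹' W := by
  obtain ⟨σ, hσ⟩ : ∃ σ, IsWinningStrategy σ y₀ := hy₀
  obtain ⟨C, hC, hCclosed, hCW⟩ := exists_mem_nhds_isClosed_subset hW
  obtain ⟨x, hxU₀, A, p, hp⟩ := BaireSpace.exists_play_into_bad (fun h => (hσ.1 h).2)
    (bad := fun y => {x | f (x, y) ∉ C}) (fun y => hCclosed.isOpen_compl.preimage (hf₂ y))
    (U₀ := interior U ∩ (fun x => f (x, y₀)) ⁻¹' interior C)
    (isOpen_interior.inter (isOpen_interior.preimage (hf₂ y₀)))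
    ⟨x₀, mem_interior_iff_mem_nhds.2 hU, mem_interior_iff_mem_nhds.2 hC⟩
  have hN : interior V ∩ {y | f (x, y) ∈ interior C} ∈ 𝓝 y₀ :=
    (isOpen_interior.inter (isOpen_interior.preimage (hf₁ x))).mem_nhds
      ⟨mem_interior_iff_mem_nhds.2 hV, hxU₀.2⟩
  obtain ⟨m, hmV, hmC⟩ := (mapClusterPt_iff_frequently.1
    (hσ.2 p fun m => (hp m).1) _ hN).exists
  -- Round `m` could not push the play into `bad`, since `f (x, p m) ∈ C`.
  obtain ⟨hpσ, hAo, hAne, hAU₀, hbad | hgood⟩ := hp m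
  · exact absurd (interior_subset hmC) hbad
  refine ⟨A m, σ (List.ofFn fun i : Fin m => p i) ∩ interior V, hAo, hAne,
    fun a ha => interior_subset (hAU₀ ha).1, (hσ.1 _).1.inter isOpen_interior, ⟨p m, hpσ, hmV⟩,
    fun y hy => interior_subset hy.2, ?_⟩
  rintro ⟨a, y⟩ ⟨ha, hy, -⟩
  by_contra hfW
  exact (hgood y hy).subset ⟨ha, fun hfC => hfW (hCW hfC)⟩

theorem dense_oscillationLT [BaireSpace X] [RegularSpace Z] {f : X × Y → Z}
    (hf₁ : ∀ x, Continuous fun y => f (x, y)) (hf₂ : ∀ y, Continuous fun x => f (x, y))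
    (hY : ∀ y : Y, IsWtildePoint y) {ρ : Z → Z → ℝ} (hfrag : Fragments ρ) {ε : ℝ}
    (hε : 0 < ε) : Dense (oscillationLT ρ f ε) := by
  refine dense_iff_inter_open.2 fun G hG ⟨⟨x₁, y₁⟩, hp⟩ => ?_
  obtain ⟨u, v, hu, hv, hx₁, hy₁, huv⟩ := isOpen_prod_iff.1 hG x₁ y₁ hp
  obtain ⟨B, hBne, ⟨O, hO, rfl⟩, hBε⟩ :=
    hfrag ε hε (f '' (u ×ˢ v)) ⟨_, mem_image_of_mem f (mk_mem_prod hx₁ hy₁)⟩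
  obtain ⟨_, ⟨⟨x, y⟩, hxy, rfl⟩, hxyO⟩ := hBne
  obtain ⟨U', V', hU', ⟨a, ha⟩, hU'u, hV', ⟨c, hc⟩, hV'v, hf⟩ :=
    exists_isOpen_prod_subset_preimage hf₁ hf₂ (hY y) (hu.mem_nhds hxy.1) (hv.mem_nhds hxy.2)
      (hO.mem_nhds hxyO)
  have hB : ∀ p ∈ U' ×ˢ V', f p ∈ f '' (u ×ˢ v) ∩ O := fun p hp =>
    ⟨mem_image_of_mem f ⟨hU'u hp.1, hV'v hp.2⟩, hf hp⟩
  exact ⟨(a, c), huv ⟨hU'u ha, hV'v hc⟩, subset_oscillationLT (hU'.prod hV')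
    (fun p hp q hq => hBε _ (hB p hp) _ (hB q hq)) ⟨ha, hc⟩⟩

end SeparatelyContinuous

theorem continuity_on_dense_Gdelta_general {X Y Z : Type*} [TopologicalSpace X]
    [TopologicalSpace Y] [TopologicalSpace Z] [BaireSpace X] [RegularSpace Z]
    (f : X × Y → Z)
    (hf₁ : ∀ x : X, Continuous fun y : Y => f (x, y))
    (hf₂ : ∀ y : Y, Continuous fun x : X => f (x, y))
    (hY : ∀ y : Y, IsWtildePoint y)
    (𝓕 : Set (Set Y)) (h𝓕 : IsRichFamily 𝓕) (hBaire : ∀ F ∈ 𝓕, BaireSpace F)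
    (ρ : Z → Z → ℝ) (hfrag : Fragments ρ)
    (hρtop : ∀ V : Set Z, IsOpen V → ∀ z ∈ V, ∃ ε : ℝ, 0 < ε ∧ {w : Z | ρ z w < ε} ⊆ V) :
    ∃ C : Set (X × Y), Dense C ∧ IsGδ C ∧ ∀ p ∈ C, ContinuousAt f p := by
  have : BaireSpace (X × Y) := h𝓕.baireSpace_prod hY hBaire
  refine ⟨⋂ n : ℕ, oscillationLT ρ f (1 / (n + 1)), ?_,
    .iInter_of_isOpen fun n => isOpen_oscillationLT ρ f _,
    fun p hp => continuousAt_of_forall_mem_oscillationLT hρtop (mem_iInter.1 hp)⟩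
  exact dense_iInter_of_isOpen (fun n => isOpen_oscillationLT ρ f _)
    fun n => dense_oscillationLT hf₁ hf₂ hY hfrag Nat.one_div_pos_of_nat

/-- If `f : X × Y → Z` is separately continuous, `X` is Baire, `Y` is a W̃-space with a
rich family of Baire subspaces and `Z` is regular and fragmented by a metric whose
topology contains the topology of `Z`, then `f` is continuous at the points of a dense
Gδ subset of `X × Y`. -/
theorem continuity_on_dense_Gdelta {X Y Z : Type*} [TopologicalSpace X]
    [TopologicalSpace Y] [TopologicalSpace Z] [BaireSpace X] [RegularSpace Z]
    (f : X × Y → Z)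
    (hf₁ : ∀ x : X, Continuous fun y : Y => f (x, y))
    (hf₂ : ∀ y : Y, Continuous fun x : X => f (x, y))
    (hY : ∀ y : Y, IsWtildePoint y)
    (𝓕 : Set (Set Y)) (h𝓕 : IsRichFamily 𝓕) (hBaire : ∀ F ∈ 𝓕, BaireSpace F)
    (ρ : Z → Z → ℝ) (hρ : IsMetricOn ρ) (hfrag : Fragments ρ)
    (hρtop : ∀ V : Set Z, IsOpen V → ∀ z ∈ V, ∃ ε : ℝ, 0 < ε ∧ {w : Z | ρ z w < ε} ⊆ V) :
    ∃ C : Set (X × Y), Dense C ∧ IsGδ C ∧ ∀ p ∈ C, ContinuousAt f p :=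
  continuity_on_dense_Gdelta_general f hf₁ hf₂ hY 𝓕 h𝓕 hBaire ρ hfrag hρtop
end

section
/- Let R be a subset of a topological space X. Then R is comeager in X if and only if player α has a winning strategy in the Banach–Mazur game BM(R) played on X. -/
/-!
If `⋂ n, U n ⊆ R` with every `U n` dense open, α wins by answering the `n`-th move `B` of β
with `B ∩ U n`. Conversely, let `σ` be a winning strategy. By Zorn's lemma, after each position
there is a maximal family of moves of β whose answers by `σ` are pairwise disjoint, and these
answers are then dense in the current set. Iterating gives a tree of positions whose level-`n`
sets are pairwise disjoint with dense open union `G n`. A point of `⋂ n, G n` lies on a single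
branch, which is a run following `σ`, hence it lies in `R`.
-/

open Filter Set Topology


/-- A legal history in a game where players alternately choose nonempty open sets
forming a decreasing sequence. -/
def LegalHistory {X : Type*} [TopologicalSpace X] (l : List (Set X)) : Prop :=
  (∀ U ∈ l, IsOpen U ∧ U.Nonempty) ∧ l.Chain' fun U V => V ⊆ U

/-- A winning strategy for player α (who moves second, i.e. at odd 0-indexed positions)
in the Banach–Mazur game `BM(R)`: the strategy produces a legal move after every legal
odd-length history, and whenever a run of the game follows the strategy, the
intersection of the moves is contained in `R`. -/
def IsWinningStrategyAlphaBM {X : Type*} [TopologicalSpace X] (R : Set X)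
    (σ : List (Set X) → Set X) : Prop :=
  (∀ l : List (Set X), LegalHistory l → l.length % 2 = 1 →
      IsOpen (σ l) ∧ (σ l).Nonempty ∧ ∀ U ∈ l.getLast?, σ l ⊆ U) ∧
  ∀ B : ℕ → Set X,
    (∀ n, IsOpen (B n) ∧ (B n).Nonempty) →
    (∀ n, B (n + 1) ⊆ B n) →
    (∀ k, B (2 * k + 1) = σ (List.ofFn fun i : Fin (2 * k + 1) => B i)) →
    (⋂ n, B n) ⊆ R

theorem List.exists_getElem_eq_of_isPrefix_succ {α : Type*} {F : ℕ → List α}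
    (hF : ∀ n, F n <+: F (n + 1)) (hlen : ∀ i, ∃ n, i < (F n).length) :
    ∃ B : ℕ → α, ∀ n i (hi : i < (F n).length), (F n)[i] = B i := by
  choose N hN using hlen
  have hmono := Nat.rel_of_forall_rel_succ_of_le (· <+: ·) hF
  refine ⟨fun i => (F (N i))[i]'(hN i), fun n i hi => ?_⟩
  rcases le_total n (N i) with h | h
  · exact (hmono h).getElem hi
  · exact ((hmono h).getElem (hN i)).symm

theorem List.take_eq_ofFn_of_getElem_eq {α : Type*} {l : List α} {B : ℕ → α}
    (hl : ∀ i (hi : i < l.length), l[i] = B i) {m : ℕ} (hm : m ≤ l.length) :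
    l.take m = List.ofFn fun i : Fin m => B i :=
  List.ext_getElem (by simpa using hm) fun i _ _ => by simp [hl]

theorem exists_dense_open_seq_of_mem_residual {X : Type*} [TopologicalSpace X] {s : Set X}
    (hs : s ∈ residual X) :
    ∃ f : ℕ → Set X, (∀ n, IsOpen (f n)) ∧ (∀ n, Dense (f n)) ∧ ⋂ n, f n ⊆ s := by
  obtain ⟨S, hSo, hSd, hSc, hSs⟩ := mem_residual_iff.1 hs
  obtain ⟨f, hf⟩ := (hSc.insert univ).exists_eq_range (insert_nonempty univ S)
  have hf_mem (n : ℕ) : f n ∈ insert univ S := hf ▸ mem_range_self n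
  refine ⟨f, fun n => ?_, fun n => ?_, ?_⟩
  · rcases hf_mem n with h | h
    · exact h ▸ isOpen_univ
    · exact hSo _ h
  · rcases hf_mem n with h | h
    · exact h ▸ dense_univ
    · exact hSd _ h
  · rw [← sInter_range, ← hf, sInter_insert]
    exact inter_subset_right.trans hSs

section DisjointAnswers

variable {X : Type*} [TopologicalSpace X]

def DisjointlyAnswered (W : Set X) (τ : Set X → Set X) (𝒜 : Set (Set X)) : Prop :=
  (∀ V ∈ 𝒜, IsOpen V ∧ V.Nonempty ∧ V ⊆ W) ∧ 𝒜.PairwiseDisjoint τ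

theorem exists_maximal_disjointlyAnswered (W : Set X) (τ : Set X → Set X) :
    ∃ 𝒜, Maximal (DisjointlyAnswered W τ) 𝒜 := by
  refine zorn_subset {𝒜 | DisjointlyAnswered W τ 𝒜} fun c hc hchain => ?_
  refine ⟨⋃₀ c, ⟨?_, ?_⟩, fun _ => subset_sUnion_of_mem⟩
  · rintro V ⟨𝒜, h𝒜, hV⟩
    exact (hc h𝒜).1 V hV
  · exact (pairwiseDisjoint_sUnion hchain.directedOn).2 fun 𝒜 h𝒜 => (hc h𝒜).2

theorem Maximal.subset_closure_biUnion_of_disjointlyAnswered {W : Set X} {τ : Set X → Set X}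
    {𝒜 : Set (Set X)} (h𝒜 : Maximal (DisjointlyAnswered W τ) 𝒜) (hW : IsOpen W)
    (hτ : ∀ V, IsOpen V → V.Nonempty → V ⊆ W → (τ V).Nonempty ∧ τ V ⊆ V) :
    W ⊆ closure (⋃ V ∈ 𝒜, τ V) := by
  set U := ⋃ V ∈ 𝒜, τ V
  by_contra hWU
  obtain ⟨x, hxW, hxU⟩ := not_subset.1 hWU
  -- the part of `W` missed by the answers can be added to the family
  set V := W ∩ (closure U)ᶜ
  have hVo : IsOpen V := hW.inter isClosed_closure.isOpen_compl
  obtain ⟨hτVne, hτV⟩ := hτ V hVo ⟨x, hxW, hxU⟩ inter_subset_left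
  have hτV_disj : Disjoint (τ V) U :=
    disjoint_compl_left.mono_left (hτV.trans (inter_subset_right.trans
      (compl_subset_compl.2 subset_closure)))
  have hins : DisjointlyAnswered W τ (insert V 𝒜) := by
    refine ⟨forall_mem_insert.2 ⟨⟨hVo, ⟨x, hxW, hxU⟩, inter_subset_left⟩, h𝒜.1.1⟩, ?_⟩
    exact h𝒜.1.2.insert fun B hB _ => hτV_disj.mono_right (subset_biUnion_of_mem hB)
  have hV𝒜 : V ∈ 𝒜 := h𝒜.2 hins (subset_insert V 𝒜) (mem_insert V 𝒜)
  exact hτVne.ne_empty (hτV_disj.eq_bot_of_le (subset_biUnion_of_mem hV𝒜))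

end DisjointAnswers

section LegalHistory

variable {X : Type*} [TopologicalSpace X]

theorem legalHistory_nil : LegalHistory ([] : List (Set X)) := ⟨by simp, List.isChain_nil⟩

theorem LegalHistory.concat {l : List (Set X)} {B : Set X} (hl : LegalHistory l)
    (hB : IsOpen B) (hBne : B.Nonempty) (hBl : B ⊆ l.getLastD univ) :
    LegalHistory (l ++ [B]) := by
  refine ⟨fun U hU => ?_, List.isChain_append.2 ⟨hl.2, List.isChain_singleton B, ?_⟩⟩
  · rcases List.mem_append.1 hU with hU | hU
    · exact hl.1 U hU
    · exact List.mem_singleton.1 hU ▸ ⟨hB, hBne⟩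
  · intro U hU V hV
    simp only [List.head?_cons, Option.mem_def, Option.some.injEq] at hV
    subst hV
    rwa [List.getLastD_eq_getLast?, Option.mem_def.1 hU] at hBl

theorem LegalHistory.isOpen_getLastD {l : List (Set X)} (hl : LegalHistory l) :
    IsOpen (l.getLastD univ) := by
  rcases l.eq_nil_or_concat with rfl | ⟨l, U, rfl⟩
  · exact isOpen_univ
  · simpa using (hl.1 U (by simp)).1

theorem LegalHistory.getElem_subset {l : List (Set X)} (hl : LegalHistory l) {i j : ℕ}
    (hij : i ≤ j) (hj : j < l.length) : l[j] ⊆ l[i] := by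
  rcases hij.eq_or_lt with rfl | hij
  · rfl
  · exact List.pairwise_iff_getElem.1 hl.2.pairwise i j _ hj hij

end LegalHistory

namespace BanachMazur

variable {X : Type*}

def respond (σ : List (Set X) → Set X) (p : List (Set X)) (B : Set X) : List (Set X) :=
  p ++ [B, σ (p ++ [B])]

@[simp]
theorem getLastD_respond (σ : List (Set X) → Set X) (p : List (Set X)) (B : Set X) :
    (respond σ p B).getLastD univ = σ (p ++ [B]) := by
  simp [respond]

@[simp]
theorem length_respond (σ : List (Set X) → Set X) (p : List (Set X)) (B : Set X) :
    (respond σ p B).length = p.length + 2 := by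
  simp [respond]

theorem prefix_respond (σ : List (Set X) → Set X) (p : List (Set X)) (B : Set X) :
    p <+: respond σ p B :=
  List.prefix_append _ _

variable [TopologicalSpace X]

def IsLegalStrategy (σ : List (Set X) → Set X) : Prop :=
  ∀ l : List (Set X), LegalHistory l → l.length % 2 = 1 →
    IsOpen (σ l) ∧ (σ l).Nonempty ∧ ∀ U ∈ l.getLast?, σ l ⊆ U

structure IsPlay (σ : List (Set X) → Set X) (l : List (Set X)) : Prop where
  legal : LegalHistory l
  even_length : Even l.length
  getElem_odd : ∀ k (hk : 2 * k + 1 < l.length), l[2 * k + 1] = σ (l.take (2 * k + 1))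

theorem isPlay_nil (σ : List (Set X) → Set X) : IsPlay σ [] :=
  ⟨legalHistory_nil, even_two_mul 0, by simp⟩

variable {σ : List (Set X) → Set X} {p : List (Set X)} {B : Set X}

theorem IsPlay.response_spec (hσ : IsLegalStrategy σ) (hp : IsPlay σ p) (hB : IsOpen B)
    (hBne : B.Nonempty) (hBp : B ⊆ p.getLastD univ) :
    IsOpen (σ (p ++ [B])) ∧ (σ (p ++ [B])).Nonempty ∧ σ (p ++ [B]) ⊆ B := by
  obtain ⟨ho, hne, hsub⟩ := hσ _ (hp.legal.concat hB hBne hBp)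
    (by simpa [← Nat.odd_iff] using hp.even_length.add_one)
  exact ⟨ho, hne, hsub B (by simp)⟩

theorem IsPlay.isPlay_respond (hσ : IsLegalStrategy σ) (hp : IsPlay σ p) (hB : IsOpen B)
    (hBne : B.Nonempty) (hBp : B ⊆ p.getLastD univ) : IsPlay σ (respond σ p B) := by
  obtain ⟨ho, hne, hsub⟩ := hp.response_spec hσ hB hBne hBp
  refine ⟨?_, by simpa using hp.even_length.add even_two, fun k hk => ?_⟩
  · simpa [respond] using (hp.legal.concat hB hBne hBp).concat ho hne (by simpa using hsub)
  · have hk' : 2 * k + 1 < p.length + 2 := by simpa using hk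
    obtain ⟨r, hr⟩ := hp.even_length
    rcases (show 2 * k + 1 < p.length ∨ 2 * k + 1 = p.length + 1 by omega) with hk | hk
    · simpa [respond, List.getElem_append_left hk,
        List.take_append_of_le_length hk.le] using hp.getElem_odd k hk
    · simp [respond, hk, List.take_append, List.take_of_length_le]

noncomputable def betaMoves (σ : List (Set X) → Set X) (p : List (Set X)) : Set (Set X) :=
  (exists_maximal_disjointlyAnswered (p.getLastD univ) fun B => σ (p ++ [B])).choose

theorem maximal_betaMoves (σ : List (Set X) → Set X) (p : List (Set X)) :
    Maximal (DisjointlyAnswered (p.getLastD univ) fun B => σ (p ++ [B])) (betaMoves σ p) :=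
  (exists_maximal_disjointlyAnswered _ _).choose_spec

theorem IsPlay.subset_closure_betaMoves (hσ : IsLegalStrategy σ) (hp : IsPlay σ p) :
    p.getLastD univ ⊆ closure (⋃ B ∈ betaMoves σ p, (respond σ p B).getLastD univ) := by
  simp only [getLastD_respond]
  exact (maximal_betaMoves σ p).subset_closure_biUnion_of_disjointlyAnswered
    hp.legal.isOpen_getLastD fun V hV hVne hVp => (hp.response_spec hσ hV hVne hVp).2

def tree (σ : List (Set X) → Set X) : ℕ → Set (List (Set X))
  | 0 => {[]}
  | n + 1 => ⋃ p ∈ tree σ n, respond σ p '' betaMoves σ p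

theorem mem_tree_succ {n : ℕ} {q : List (Set X)} :
    q ∈ tree σ (n + 1) ↔ ∃ p ∈ tree σ n, ∃ B ∈ betaMoves σ p, respond σ p B = q := by
  simp [tree]

theorem IsPlay.isPlay_respond_of_mem_betaMoves (hσ : IsLegalStrategy σ) (hp : IsPlay σ p)
    (hB : B ∈ betaMoves σ p) :
    IsPlay σ (respond σ p B) ∧ (respond σ p B).getLastD univ ⊆ p.getLastD univ := by
  obtain ⟨hBo, hBne, hBp⟩ := (maximal_betaMoves σ p).1.1 B hB
  exact ⟨hp.isPlay_respond hσ hBo hBne hBp,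
    getLastD_respond σ p B ▸ (hp.response_spec hσ hBo hBne hBp).2.2.trans hBp⟩

theorem isPlay_of_mem_tree (hσ : IsLegalStrategy σ) {n : ℕ} {p : List (Set X)}
    (hp : p ∈ tree σ n) : IsPlay σ p ∧ p.length = 2 * n := by
  induction n generalizing p with
  | zero => exact (mem_singleton_iff.1 hp) ▸ ⟨isPlay_nil σ, rfl⟩
  | succ n ih =>
    obtain ⟨q, hq, B, hB, rfl⟩ := mem_tree_succ.1 hp
    exact ⟨((ih hq).1.isPlay_respond_of_mem_betaMoves hσ hB).1, by simp [(ih hq).2]; ring⟩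

theorem pairwiseDisjoint_tree (hσ : IsLegalStrategy σ) (n : ℕ) :
    (tree σ n).PairwiseDisjoint (·.getLastD univ) := by
  induction n with
  | zero => exact pairwiseDisjoint_singleton _ _
  | succ n ih =>
    rintro _ hq₁ _ hq₂ hne
    obtain ⟨p₁, hp₁, B₁, hB₁, rfl⟩ := mem_tree_succ.1 hq₁
    obtain ⟨p₂, hp₂, B₂, hB₂, rfl⟩ := mem_tree_succ.1 hq₂
    by_cases hp : p₁ = p₂
    · subst hp
      simp only [Function.onFun, getLastD_respond]
      exact (maximal_betaMoves σ p₁).1.2 hB₁ hB₂ fun h => hne (h ▸ rfl)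
    · exact (ih hp₁ hp₂ hp).mono
        ((isPlay_of_mem_tree hσ hp₁).1.isPlay_respond_of_mem_betaMoves hσ hB₁).2
        ((isPlay_of_mem_tree hσ hp₂).1.isPlay_respond_of_mem_betaMoves hσ hB₂).2

theorem isOpen_biUnion_tree (hσ : IsLegalStrategy σ) (n : ℕ) :
    IsOpen (⋃ p ∈ tree σ n, p.getLastD univ) :=
  isOpen_biUnion fun _ hp => (isPlay_of_mem_tree hσ hp).1.legal.isOpen_getLastD

theorem dense_biUnion_tree (hσ : IsLegalStrategy σ) (n : ℕ) :
    Dense (⋃ p ∈ tree σ n, p.getLastD univ) := by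
  induction n with
  | zero => simp [tree]
  | succ n ih =>
    refine dense_closure.1 (ih.mono (iUnion₂_subset fun p hp => ?_))
    refine ((isPlay_of_mem_tree hσ hp).1.subset_closure_betaMoves hσ).trans (closure_mono ?_)
    exact iUnion₂_subset fun B hB =>
      subset_biUnion_of_mem (u := (·.getLastD univ)) (mem_tree_succ.2 ⟨p, hp, B, hB, rfl⟩)

theorem exists_branch_of_forall_mem_tree (hσ : IsLegalStrategy σ) {x : X}
    (hx : ∀ n, x ∈ ⋃ p ∈ tree σ n, p.getLastD univ) :
    ∃ F : ℕ → List (Set X), (∀ n, F n ∈ tree σ n) ∧ (∀ n, F n <+: F (n + 1)) ∧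
      ∀ n, x ∈ (F n).getLastD univ := by
  simp only [mem_iUnion₂] at hx
  choose F hF hxF using hx
  refine ⟨F, hF, fun n => ?_, hxF⟩
  obtain ⟨p, hp, B, hB, hpB⟩ := mem_tree_succ.1 (hF (n + 1))
  have hxp : x ∈ p.getLastD univ :=
    ((isPlay_of_mem_tree hσ hp).1.isPlay_respond_of_mem_betaMoves hσ hB).2 (hpB ▸ hxF (n + 1))
  -- the level-`n` sets are disjoint, so the parent of `F (n + 1)` is `F n`
  obtain rfl : p = F n := (pairwiseDisjoint_tree hσ n).elim_set hp (hF n) x hxp (hxF n)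
  exact hpB ▸ prefix_respond σ (F n) B

theorem exists_run_of_branch {F : ℕ → List (Set X)}
    (hF : ∀ n, IsPlay σ (F n) ∧ (F n).length = 2 * n) (hpre : ∀ n, F n <+: F (n + 1))
    {x : X} (hx : ∀ n, x ∈ (F n).getLastD univ) :
    ∃ B : ℕ → Set X, (∀ n, IsOpen (B n) ∧ (B n).Nonempty) ∧ (∀ n, B (n + 1) ⊆ B n) ∧
      (∀ k, B (2 * k + 1) = σ (List.ofFn fun i : Fin (2 * k + 1) => B i)) ∧ x ∈ ⋂ n, B n := by
  obtain ⟨hplay, hlen⟩ := forall_and.1 hF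
  obtain ⟨B, hB⟩ := List.exists_getElem_eq_of_isPrefix_succ hpre
    fun i => ⟨i + 1, by rw [hlen]; omega⟩
  have hanti (n : ℕ) : B (n + 1) ⊆ B n := by
    rw [← hB (n + 1) n (by rw [hlen]; omega), ← hB (n + 1) (n + 1) (by rw [hlen]; omega)]
    exact (hplay _).legal.getElem_subset n.le_succ _
  refine ⟨B, fun n => ?_, hanti, fun k => ?_, mem_iInter.2 fun n => ?_⟩
  · rw [← hB (n + 1) n (by rw [hlen]; omega)]
    exact (hplay _).legal.1 _ (List.getElem_mem _)
  · have hk : 2 * k + 1 < (F (k + 1)).length := by rw [hlen]; omega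
    rw [← hB (k + 1) (2 * k + 1) hk, (hplay (k + 1)).getElem_odd k hk,
      List.take_eq_ofFn_of_getElem_eq (hB (k + 1)) hk.le]
  · have hlast : (F (n + 1)).getLastD univ = B (2 * n + 1) := by
      rw [← hB (n + 1) (2 * n + 1) (by rw [hlen]; omega)]
      simp [List.getLastD_eq_getLast?, List.getLast?_eq_getElem?, hlen, Nat.mul_succ]
    exact antitone_nat_of_succ_le hanti (by omega : n ≤ 2 * n + 1) (hlast ▸ hx (n + 1))

end BanachMazur

section Oxtoby

open BanachMazur

variable {X : Type*} [TopologicalSpace X] {R : Set X}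

theorem isWinningStrategyAlphaBM_of_dense_open {f : ℕ → Set X} (hfo : ∀ n, IsOpen (f n))
    (hfd : ∀ n, Dense (f n)) (hfR : ⋂ n, f n ⊆ R) :
    IsWinningStrategyAlphaBM R fun l => l.getLastD univ ∩ f (l.length / 2) := by
  refine ⟨fun l hl hodd => ?_, fun B _ _ hBσ => ?_⟩
  · rcases l.eq_nil_or_concat with rfl | ⟨l, U, rfl⟩
    · simp at hodd
    obtain ⟨hUo, hUne⟩ := hl.1 U (by simp)
    simp only [List.concat_eq_append, List.getLastD_concat, List.getLast?_concat,
      Option.mem_def, Option.some.injEq, forall_eq']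
    exact ⟨hUo.inter (hfo _), (hfd _).inter_open_nonempty U hUo hUne, inter_subset_left⟩
  · refine (subset_iInter fun k => (iInter_subset B (2 * k + 1)).trans ?_).trans hfR
    rw [hBσ k]
    simpa only [List.length_ofFn, (by omega : (2 * k + 1) / 2 = k)] using inter_subset_right

theorem mem_residual_of_isWinningStrategyAlphaBM {σ : List (Set X) → Set X}
    (hσ : IsWinningStrategyAlphaBM R σ) : R ∈ residual X := by
  obtain ⟨hlegal, hwin⟩ := hσ
  have hG (n : ℕ) : (⋃ p ∈ tree σ n, p.getLastD univ) ∈ residual X :=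
    residual_of_dense_open (isOpen_biUnion_tree hlegal n) (dense_biUnion_tree hlegal n)
  filter_upwards [countable_iInter_mem.2 hG] with x hx
  obtain ⟨F, hF, hpre, hxF⟩ := exists_branch_of_forall_mem_tree hlegal (mem_iInter.1 hx)
  obtain ⟨B, hBo, hBa, hBσ, hxB⟩ :=
    exists_run_of_branch (fun n => isPlay_of_mem_tree hlegal (hF n)) hpre hxF
  exact hwin B hBo hBa hBσ hxB

end Oxtoby

/-- Oxtoby's theorem: `R` is comeager in `X` iff player α has a winning strategy in the
Banach–Mazur game `BM(R)`. -/
theorem comeager_iff_winning_strategy_BM {X : Type*} [TopologicalSpace X] (R : Set X) :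
    R ∈ residual X ↔ ∃ σ : List (Set X) → Set X, IsWinningStrategyAlphaBM R σ := by
  constructor
  · intro hR
    obtain ⟨f, hfo, hfd, hfR⟩ := exists_dense_open_seq_of_mem_residual hR
    exact ⟨_, isWinningStrategyAlphaBM_of_dense_open hfo hfd hfR⟩
  · rintro ⟨σ, hσ⟩
    exact mem_residual_of_isWinningStrategyAlphaBM hσ
end
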